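/- arXiv:2605.17502 — 5 statements merged into one kernel-verified Lean document; each statement's English description precedes it below -/
import Mathlib

section
/- Let a,b be smooth real-valued functions on ℝ² compactly supported in the open upper half-plane and divergence-free in the hyperbolic sense, i.e. ∂ₓa + ∂_y b − 2b/y = 0 on {y>0}. Then, with M11 = ∂ₓa − b/y, M12 = ∂_y a − a/y, M21 = ∂ₓb + a/y, M22 = ∂_y b − b/y, the deformation dissipation form satisfies the exact identity ∫∫_{y>0} [2·M11² + 2·M22² + (M12 + M21)²]·y⁻² dx dy = ∫∫_{y>0} [M11² + M12² + M21² + M22²]·y⁻² dx dy + ∫∫_{y>0} (a² + b²)·y⁻⁴ dx dy. (In invariant form: 2‖Def u‖²_{L²(ℍ²)} = ‖∇u‖²_{L²(ℍ²)} + ‖u‖²_{L²(ℍ²)}, i.e. the deformation Laplacian is coercive on ℍ² because the Ricci term reinforces dissipation.) -/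
open MeasureTheory

/-- Partial derivative in the `x` direction of a function on `ℝ × ℝ`. -/
noncomputable def pdX (f : ℝ × ℝ → ℝ) (p : ℝ × ℝ) : ℝ := fderiv ℝ f p (1, 0)

/-- Partial derivative in the `y` direction of a function on `ℝ × ℝ`. -/
noncomputable def pdY (f : ℝ × ℝ → ℝ) (p : ℝ × ℝ) : ℝ := fderiv ℝ f p (0, 1)

/-- The open upper half-plane, the model of the hyperbolic plane `ℍ²`. -/
def upperHalf : Set (ℝ × ℝ) := {p : ℝ × ℝ | 0 < p.2}

private lemma aux_pd_div_pow {f : ℝ × ℝ → ℝ} {p : ℝ × ℝ} (hf : DifferentiableAt ℝ f p) (k : ℕ)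
    (hy : p.2 ≠ 0) (v : ℝ × ℝ) :
    fderiv ℝ (fun q => f q / q.2 ^ (k+1)) p v
      = fderiv ℝ f p v / p.2 ^ (k+1) - ((k:ℝ)+1) * f p * v.2 / p.2 ^ (k+2) := by
  have hsnd : HasFDerivAt (fun q : ℝ × ℝ => q.2) (ContinuousLinearMap.snd ℝ ℝ ℝ) p :=
    hasFDerivAt_snd
  have hD : HasDerivAt (fun t : ℝ => (t ^ (k+1))⁻¹)
      (-(((k:ℝ)+1) * p.2 ^ k) / (p.2 ^ (k+1)) ^ 2) p.2 := by
    have h := (hasDerivAt_pow (k+1) p.2).inv (pow_ne_zero _ hy)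
    simp at h
    exact h
  have hinv := hD.comp_hasFDerivAt p hsnd
  have H := hf.hasFDerivAt.mul hinv
  have heq : (fun q : ℝ × ℝ => f q / q.2 ^ (k+1))
      = fun y => f y * ((fun t : ℝ => (t ^ (k+1))⁻¹) ∘ Prod.snd) y := by
    funext q; simp [div_eq_mul_inv, Function.comp]
  rw [heq, (show HasFDerivAt (fun y => f y * ((fun t : ℝ => (t ^ (k+1))⁻¹) ∘ Prod.snd) y) _ p from H).fderiv]
  simp
  field_simp
  ring

private lemma aux_pd_div3 {f : ℝ × ℝ → ℝ} {p : ℝ × ℝ} (hf : DifferentiableAt ℝ f p)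
    (hy : p.2 ≠ 0) (v : ℝ × ℝ) :
    fderiv ℝ (fun q => f q / q.2 ^ 3) p v
      = fderiv ℝ f p v / p.2 ^ 3 - 3 * f p * v.2 / p.2 ^ 4 := by
  have := aux_pd_div_pow hf 2 hy v
  norm_num at this
  convert this using 2 <;> norm_num

private lemma aux_pd_sub {f g : ℝ × ℝ → ℝ} {p : ℝ × ℝ} (hf : DifferentiableAt ℝ f p)
    (hg : DifferentiableAt ℝ g p) (v : ℝ × ℝ) :
    fderiv ℝ (fun q => f q - g q) p v = fderiv ℝ f p v - fderiv ℝ g p v := by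
  rw [fderiv_fun_sub hf hg]; simp

private lemma aux_pd_add {f g : ℝ × ℝ → ℝ} {p : ℝ × ℝ} (hf : DifferentiableAt ℝ f p)
    (hg : DifferentiableAt ℝ g p) (v : ℝ × ℝ) :
    fderiv ℝ (fun q => f q + g q) p v = fderiv ℝ f p v + fderiv ℝ g p v := by
  rw [fderiv_fun_add hf hg]; simp

private lemma aux_pd_mul {f g : ℝ × ℝ → ℝ} {p : ℝ × ℝ} (hf : DifferentiableAt ℝ f p)
    (hg : DifferentiableAt ℝ g p) (v : ℝ × ℝ) :
    fderiv ℝ (fun q => f q * g q) p v = fderiv ℝ f p v * g p + f p * fderiv ℝ g p v := by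
  rw [fderiv_fun_mul hf hg]; simp; ring

private lemma aux_pd_const_mul {f : ℝ × ℝ → ℝ} {p : ℝ × ℝ} (hf : DifferentiableAt ℝ f p)
    (c : ℝ) (v : ℝ × ℝ) :
    fderiv ℝ (fun q => c * f q) p v = c * fderiv ℝ f p v := by
  rw [fderiv_const_mul hf]; simp

private lemma aux_pd_snd {p : ℝ × ℝ} (v : ℝ × ℝ) :
    fderiv ℝ (fun q : ℝ × ℝ => q.2) p v = v.2 := by
  rw [(hasFDerivAt_snd (𝕜 := ℝ) (p := p)).fderiv]; rfl

private lemma aux_contDiff_div_pow {ε : ℝ} (hε : 0 < ε) {f : ℝ × ℝ → ℝ}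
    (hf : ContDiff ℝ (⊤ : ℕ∞) f) (h0 : ∀ p : ℝ × ℝ, p.2 < ε → f p = 0) (k : ℕ) :
    ContDiff ℝ (⊤ : ℕ∞) (fun p : ℝ × ℝ => f p / p.2 ^ k) := by
  rw [contDiff_iff_contDiffAt]
  intro p
  rcases lt_or_ge p.2 ε with h | h
  · have hop : IsOpen {q : ℝ × ℝ | q.2 < ε} := isOpen_lt continuous_snd continuous_const
    have hev : (fun q : ℝ × ℝ => f q / q.2 ^ k) =ᶠ[nhds p] fun _ => (0:ℝ) := by
      filter_upwards [hop.mem_nhds h] with q hq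
      simp [h0 q hq]
    exact (contDiffAt_const (c := (0:ℝ))).congr_of_eventuallyEq hev
  · exact hf.contDiffAt.div ((contDiff_snd.pow k).contDiffAt)
      (pow_ne_zero _ (ne_of_gt (lt_of_lt_of_le hε h)))

private lemma aux_fderiv_zero_of_lt {f : ℝ × ℝ → ℝ} {ε : ℝ}
    (h0 : ∀ q : ℝ × ℝ, q.2 < ε → f q = 0) {p : ℝ × ℝ} (hp : p.2 < ε) :
    fderiv ℝ f p = 0 := by
  have hop : IsOpen {q : ℝ × ℝ | q.2 < ε} := isOpen_lt continuous_snd continuous_const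
  have hev : f =ᶠ[nhds p] (fun _ => (0:ℝ)) := by
    filter_upwards [hop.mem_nhds hp] with q hq using h0 q hq
  rw [hev.fderiv_eq]
  exact fderiv_const_apply 0

private lemma aux_pd_comm {f : ℝ × ℝ → ℝ} (hf : ContDiff ℝ (⊤ : ℕ∞) f) (p v w : ℝ × ℝ) :
    fderiv ℝ (fun q => fderiv ℝ f q w) p v = fderiv ℝ (fun q => fderiv ℝ f q v) p w := by
  have hd : ContDiff ℝ (⊤ : ℕ∞) (fderiv ℝ f) := hf.fderiv_right (by simp)
  have hdp : DifferentiableAt ℝ (fderiv ℝ f) p := (hd.differentiable (by simp)) p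
  have h1 : ∀ u : ℝ × ℝ, fderiv ℝ (fun q => fderiv ℝ f q u) p
      = (fderiv ℝ (fderiv ℝ f) p).flip u := by
    intro u
    rw [fderiv_clm_apply hdp (differentiableAt_const u)]
    simp
  rw [h1 w, h1 v]
  simp only [ContinuousLinearMap.flip_apply]
  exact (hf.contDiffAt.isSymmSndFDerivAt (by rw [minSmoothness_of_isRCLikeNormedField]; exact WithTop.coe_le_coe.mpr le_top)) v w

private lemma aux_pd_integrable {F : ℝ × ℝ → ℝ} (hF : ContDiff ℝ (⊤ : ℕ∞) F)
    (hc : HasCompactSupport F) (v : ℝ × ℝ) :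
    Integrable (fun p : ℝ × ℝ => fderiv ℝ F p v) := by
  have hcont : Continuous fun p : ℝ × ℝ => fderiv ℝ F p v :=
    ((hF.fderiv_right (m := (⊤ : ℕ∞)) (by simp)).clm_apply contDiff_const).continuous
  have hsupp : HasCompactSupport fun p : ℝ × ℝ => fderiv ℝ F p v := by
    apply HasCompactSupport.intro hc
    intro x hx
    have h : fderiv ℝ F x = 0 := by
      by_contra hne
      exact hx (support_fderiv_subset ℝ (by simpa [Function.mem_support] using hne))
    simp [h]
  exact hcont.integrable_of_hasCompactSupport hsupp

private lemma aux_integral_pd_zero {F : ℝ × ℝ → ℝ} (hF : ContDiff ℝ (⊤ : ℕ∞) F)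
    (hc : HasCompactSupport F) (v : ℝ × ℝ) :
    ∫ p : ℝ × ℝ, fderiv ℝ F p v = 0 := by
  have hI := aux_pd_integrable hF hc v
  have hIF := hF.continuous.integrable_of_hasCompactSupport (μ := volume) hc
  have h1 : Integrable (fun x : ℝ × ℝ => fderiv ℝ (fun _ : ℝ × ℝ => (1:ℝ)) x v * F x) volume := by
    simp only [fderiv_fun_const, Pi.zero_apply, ContinuousLinearMap.zero_apply, zero_mul]
    exact integrable_zero _ _ _
  have h2 : Integrable (fun x : ℝ × ℝ => (1:ℝ) * fderiv ℝ F x v) volume := by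
    simpa using hI
  have h3 : Integrable (fun x : ℝ × ℝ => (1:ℝ) * F x) volume := by simpa using hIF
  have h := integral_mul_fderiv_eq_neg_fderiv_mul_of_integrable (μ := volume)
      (f := fun _ : ℝ × ℝ => (1:ℝ)) (g := F) (v := v) h1 h2 h3
      (fun x _ => differentiableAt_const (1:ℝ)) (fun x _ => hF.differentiable (by simp) x)
  simpa using h

private noncomputable def auxQ1 (a b : ℝ × ℝ → ℝ) (p : ℝ × ℝ) : ℝ :=
  (2 * (fderiv ℝ a p (1, 0) * fderiv ℝ a p (1, 0))
      + 2 * (fderiv ℝ b p (0, 1) * fderiv ℝ b p (0, 1))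
      + (fderiv ℝ a p (0, 1) + fderiv ℝ b p (1, 0))
        * (fderiv ℝ a p (0, 1) + fderiv ℝ b p (1, 0))) * p.2 * p.2
    - (4 * (fderiv ℝ a p (1, 0) * b p) + 4 * (fderiv ℝ b p (0, 1) * b p)) * p.2
    + 4 * (b p * b p)

private noncomputable def auxQ2 (a b : ℝ × ℝ → ℝ) (p : ℝ × ℝ) : ℝ :=
  (fderiv ℝ a p (1, 0) * fderiv ℝ a p (1, 0) + fderiv ℝ a p (0, 1) * fderiv ℝ a p (0, 1)
      + fderiv ℝ b p (1, 0) * fderiv ℝ b p (1, 0)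
      + fderiv ℝ b p (0, 1) * fderiv ℝ b p (0, 1)) * p.2 * p.2
    + (-(2 * (fderiv ℝ a p (1, 0) * b p)) - 2 * (fderiv ℝ a p (0, 1) * a p)
        + 2 * (fderiv ℝ b p (1, 0) * a p) - 2 * (fderiv ℝ b p (0, 1) * b p)) * p.2
    + (2 * (a p * a p) + 2 * (b p * b p))

private noncomputable def auxQ3 (a b : ℝ × ℝ → ℝ) (p : ℝ × ℝ) : ℝ :=
  a p * a p + b p * b p

private noncomputable def auxQPhi (a b : ℝ × ℝ → ℝ) (q : ℝ × ℝ) : ℝ :=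
  2 * (fderiv ℝ a q (0, 1) * b q) * q.2 - 2 * (a q * b q)

private noncomputable def auxQPsi (a b : ℝ × ℝ → ℝ) (q : ℝ × ℝ) : ℝ :=
  a q * a q + b q * b q - 2 * (fderiv ℝ a q (1, 0) * b q) * q.2

private noncomputable def auxPhi (a b : ℝ × ℝ → ℝ) (q : ℝ × ℝ) : ℝ := auxQPhi a b q / q.2 ^ 3

private noncomputable def auxPsi (a b : ℝ × ℝ → ℝ) (q : ℝ × ℝ) : ℝ := auxQPsi a b q / q.2 ^ 3

set_option maxHeartbeats 1600000 in
/-- For a divergence-free compactly supported field `u = (a,b)` on `ℍ²`, the deformation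
dissipation form satisfies `2‖Def u‖² = ‖∇u‖² + ‖u‖²`: the Ricci term reinforces
dissipation, so the deformation Laplacian is coercive on `ℍ²`. -/
theorem deformation_dissipation_coercive_on_H2
    (a b : ℝ × ℝ → ℝ)
    (ha : ContDiff ℝ (⊤ : ℕ∞) a) (hb : ContDiff ℝ (⊤ : ℕ∞) b)
    (hca : HasCompactSupport a) (hcb : HasCompactSupport b)
    (hsa : tsupport a ⊆ upperHalf) (hsb : tsupport b ⊆ upperHalf)
    (hdiv : ∀ p ∈ upperHalf, pdX a p + pdY b p - 2 * b p / p.2 = 0) :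
    ∫ p in upperHalf,
        (2 * (pdX a p - b p / p.2) ^ 2 + 2 * (pdY b p - b p / p.2) ^ 2
          + ((pdY a p - a p / p.2) + (pdX b p + a p / p.2)) ^ 2) / p.2 ^ 2
      = (∫ p in upperHalf,
          ((pdX a p - b p / p.2) ^ 2 + (pdY a p - a p / p.2) ^ 2
            + (pdX b p + a p / p.2) ^ 2 + (pdY b p - b p / p.2) ^ 2) / p.2 ^ 2)
        + ∫ p in upperHalf, (a p ^ 2 + b p ^ 2) / p.2 ^ 4 := by
  simp only [pdX, pdY] at hdiv
  -- compact support and the gap `ε` to the boundary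
  have hK : IsCompact (tsupport a ∪ tsupport b) := hca.union hcb
  have hKU : tsupport a ∪ tsupport b ⊆ upperHalf := Set.union_subset hsa hsb
  obtain ⟨ε, hε, hKε⟩ : ∃ ε : ℝ, 0 < ε ∧ ∀ p ∈ tsupport a ∪ tsupport b, ε ≤ p.2 := by
    rcases (tsupport a ∪ tsupport b).eq_empty_or_nonempty with h | h
    · exact ⟨1, one_pos, by simp [h]⟩
    · obtain ⟨p₀, hp₀, hmin⟩ := hK.exists_isMinOn h continuous_snd.continuousOn
      exact ⟨p₀.2, hKU hp₀, fun p hp => (isMinOn_iff.mp hmin) p hp⟩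
  -- vanishing of everything below the gap and outside the support
  have h0a : ∀ q : ℝ × ℝ, q.2 < ε → a q = 0 := fun q hq =>
    image_eq_zero_of_notMem_tsupport fun hmem => absurd (hKε q (Or.inl hmem)) (not_le.mpr hq)
  have h0b : ∀ q : ℝ × ℝ, q.2 < ε → b q = 0 := fun q hq =>
    image_eq_zero_of_notMem_tsupport fun hmem => absurd (hKε q (Or.inr hmem)) (not_le.mpr hq)
  have hza : ∀ q : ℝ × ℝ, q.2 < ε → fderiv ℝ a q = 0 := fun q hq =>
    aux_fderiv_zero_of_lt h0a hq
  have hzb : ∀ q : ℝ × ℝ, q.2 < ε → fderiv ℝ b q = 0 := fun q hq =>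
    aux_fderiv_zero_of_lt h0b hq
  have hKa : ∀ q ∉ tsupport a ∪ tsupport b, a q = 0 := fun q hq =>
    image_eq_zero_of_notMem_tsupport fun h => hq (Or.inl h)
  have hKb : ∀ q ∉ tsupport a ∪ tsupport b, b q = 0 := fun q hq =>
    image_eq_zero_of_notMem_tsupport fun h => hq (Or.inr h)
  have hKda : ∀ q ∉ tsupport a ∪ tsupport b, fderiv ℝ a q = 0 := fun q hq => by
    by_contra h
    exact hq (Or.inl (support_fderiv_subset ℝ (Function.mem_support.mpr h)))
  have hKdb : ∀ q ∉ tsupport a ∪ tsupport b, fderiv ℝ b q = 0 := fun q hq => by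
    by_contra h
    exact hq (Or.inr (support_fderiv_subset ℝ (Function.mem_support.mpr h)))
  -- smoothness of the partial derivatives
  have hax : ContDiff ℝ (⊤ : ℕ∞) fun q : ℝ × ℝ => fderiv ℝ a q (1, 0) :=
    (ha.fderiv_right (m := (⊤ : ℕ∞)) (by simp)).clm_apply contDiff_const
  have hay : ContDiff ℝ (⊤ : ℕ∞) fun q : ℝ × ℝ => fderiv ℝ a q (0, 1) :=
    (ha.fderiv_right (m := (⊤ : ℕ∞)) (by simp)).clm_apply contDiff_const
  have hbx : ContDiff ℝ (⊤ : ℕ∞) fun q : ℝ × ℝ => fderiv ℝ b q (1, 0) :=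
    (hb.fderiv_right (m := (⊤ : ℕ∞)) (by simp)).clm_apply contDiff_const
  have hby : ContDiff ℝ (⊤ : ℕ∞) fun q : ℝ × ℝ => fderiv ℝ b q (0, 1) :=
    (hb.fderiv_right (m := (⊤ : ℕ∞)) (by simp)).clm_apply contDiff_const
  have da : Differentiable ℝ a := ha.differentiable (by simp)
  have db : Differentiable ℝ b := hb.differentiable (by simp)
  have dax : Differentiable ℝ fun q : ℝ × ℝ => fderiv ℝ a q (1, 0) := hax.differentiable (by simp)
  have day : Differentiable ℝ fun q : ℝ × ℝ => fderiv ℝ a q (0, 1) := hay.differentiable (by simp)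
  have dbx : Differentiable ℝ fun q : ℝ × ℝ => fderiv ℝ b q (1, 0) := hbx.differentiable (by simp)
  have dby : Differentiable ℝ fun q : ℝ × ℝ => fderiv ℝ b q (0, 1) := hby.differentiable (by simp)
  -- smoothness of the numerator functions
  have hQ1s : ContDiff ℝ (⊤ : ℕ∞) (auxQ1 a b) := by
    unfold auxQ1
    exact ((((contDiff_const.mul (hax.mul hax)).add
        (contDiff_const.mul (hby.mul hby))).add
        ((hay.add hbx).mul (hay.add hbx))).mul contDiff_snd).mul contDiff_snd
      |>.sub (((contDiff_const.mul (hax.mul hb)).add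
        (contDiff_const.mul (hby.mul hb))).mul contDiff_snd)
      |>.add (contDiff_const.mul (hb.mul hb))
  have hQ2s : ContDiff ℝ (⊤ : ℕ∞) (auxQ2 a b) := by
    unfold auxQ2
    exact (((((hax.mul hax).add (hay.mul hay)).add (hbx.mul hbx)).add
        (hby.mul hby)).mul contDiff_snd).mul contDiff_snd
      |>.add (((((contDiff_const.mul (hax.mul hb)).neg.sub
        (contDiff_const.mul (hay.mul ha))).add
        (contDiff_const.mul (hbx.mul ha))).sub
        (contDiff_const.mul (hby.mul hb))).mul contDiff_snd)
      |>.add ((contDiff_const.mul (ha.mul ha)).add (contDiff_const.mul (hb.mul hb)))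
  have hQ3s : ContDiff ℝ (⊤ : ℕ∞) (auxQ3 a b) := by
    unfold auxQ3
    exact (ha.mul ha).add (hb.mul hb)
  have hQPhis : ContDiff ℝ (⊤ : ℕ∞) (auxQPhi a b) := by
    unfold auxQPhi
    exact ((contDiff_const.mul (hay.mul hb)).mul contDiff_snd).sub
      (contDiff_const.mul (ha.mul hb))
  have hQPsis : ContDiff ℝ (⊤ : ℕ∞) (auxQPsi a b) := by
    unfold auxQPsi
    exact ((ha.mul ha).add (hb.mul hb)).sub
      ((contDiff_const.mul (hax.mul hb)).mul contDiff_snd)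
  -- vanishing of the numerator functions
  have h0Q1 : ∀ q : ℝ × ℝ, q.2 < ε → auxQ1 a b q = 0 := fun q hq => by
    simp [auxQ1, h0a q hq, h0b q hq, hza q hq, hzb q hq]
  have h0Q2 : ∀ q : ℝ × ℝ, q.2 < ε → auxQ2 a b q = 0 := fun q hq => by
    simp [auxQ2, h0a q hq, h0b q hq, hza q hq, hzb q hq]
  have h0Q3 : ∀ q : ℝ × ℝ, q.2 < ε → auxQ3 a b q = 0 := fun q hq => by
    simp [auxQ3, h0a q hq, h0b q hq]
  have h0QPhi : ∀ q : ℝ × ℝ, q.2 < ε → auxQPhi a b q = 0 := fun q hq => by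
    simp [auxQPhi, h0a q hq, h0b q hq, hza q hq]
  have h0QPsi : ∀ q : ℝ × ℝ, q.2 < ε → auxQPsi a b q = 0 := fun q hq => by
    simp [auxQPsi, h0a q hq, h0b q hq, hza q hq]
  have hKQ1 : ∀ q ∉ tsupport a ∪ tsupport b, auxQ1 a b q = 0 := fun q hq => by
    simp [auxQ1, hKa q hq, hKb q hq, hKda q hq, hKdb q hq]
  have hKQ2 : ∀ q ∉ tsupport a ∪ tsupport b, auxQ2 a b q = 0 := fun q hq => by
    simp [auxQ2, hKa q hq, hKb q hq, hKda q hq, hKdb q hq]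
  have hKQ3 : ∀ q ∉ tsupport a ∪ tsupport b, auxQ3 a b q = 0 := fun q hq => by
    simp [auxQ3, hKa q hq, hKb q hq]
  have hKQPhi : ∀ q ∉ tsupport a ∪ tsupport b, auxQPhi a b q = 0 := fun q hq => by
    simp [auxQPhi, hKa q hq, hKb q hq, hKda q hq]
  have hKQPsi : ∀ q ∉ tsupport a ∪ tsupport b, auxQPsi a b q = 0 := fun q hq => by
    simp [auxQPsi, hKa q hq, hKb q hq, hKda q hq]
  -- integrability of the monomial pieces
  have intpiece : ∀ f : ℝ × ℝ → ℝ, ContDiff ℝ (⊤ : ℕ∞) f → (∀ q : ℝ × ℝ, q.2 < ε → f q = 0) →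
      (∀ q ∉ tsupport a ∪ tsupport b, f q = 0) → ∀ k : ℕ,
      Integrable (fun p : ℝ × ℝ => f p / p.2 ^ k) volume := by
    intro f hf h0 hKf k
    have hcd := aux_contDiff_div_pow hε hf h0 k
    have hsup : HasCompactSupport fun p : ℝ × ℝ => f p / p.2 ^ k :=
      HasCompactSupport.intro hK fun x hx => by simp [hKf x hx]
    exact hcd.continuous.integrable_of_hasCompactSupport (μ := volume) hsup
  have hi1 := intpiece (auxQ1 a b) hQ1s h0Q1 hKQ1 4
  have hi2 := intpiece (auxQ2 a b) hQ2s h0Q2 hKQ2 4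
  have hi3 := intpiece (auxQ3 a b) hQ3s h0Q3 hKQ3 4
  -- the potentials and their properties
  have hPhis : ContDiff ℝ (⊤ : ℕ∞) (auxPhi a b) := by
    unfold auxPhi
    exact aux_contDiff_div_pow hε hQPhis h0QPhi 3
  have hPsis : ContDiff ℝ (⊤ : ℕ∞) (auxPsi a b) := by
    unfold auxPsi
    exact aux_contDiff_div_pow hε hQPsis h0QPsi 3
  have hPhic : HasCompactSupport (auxPhi a b) :=
    HasCompactSupport.intro hK fun x hx => by simp [auxPhi, hKQPhi x hx]
  have hPsic : HasCompactSupport (auxPsi a b) :=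
    HasCompactSupport.intro hK fun x hx => by simp [auxPsi, hKQPsi x hx]
  have hiPhi : Integrable (fun p : ℝ × ℝ => fderiv ℝ (auxPhi a b) p (1, 0)) volume :=
    aux_pd_integrable hPhis hPhic (1, 0)
  have hiPsi : Integrable (fun p : ℝ × ℝ => fderiv ℝ (auxPsi a b) p (0, 1)) volume :=
    aux_pd_integrable hPsis hPsic (0, 1)
  have hzPhi : ∫ p : ℝ × ℝ, fderiv ℝ (auxPhi a b) p (1, 0) = 0 :=
    aux_integral_pd_zero hPhis hPhic (1, 0)
  have hzPsi : ∫ p : ℝ × ℝ, fderiv ℝ (auxPsi a b) p (0, 1) = 0 :=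
    aux_integral_pd_zero hPsis hPsic (0, 1)
  -- conversion of the three set integrals into whole-plane integrals of monomial form
  have e1 : (∫ p in upperHalf,
        (2 * (pdX a p - b p / p.2) ^ 2 + 2 * (pdY b p - b p / p.2) ^ 2
          + ((pdY a p - a p / p.2) + (pdX b p + a p / p.2)) ^ 2) / p.2 ^ 2)
      = ∫ p : ℝ × ℝ, auxQ1 a b p / p.2 ^ 4 := by
    rw [setIntegral_eq_integral_of_forall_compl_eq_zero (fun p hp => by
      have h2 : p.2 < ε := lt_of_le_of_lt (not_lt.mp hp) hε
      simp [pdX, pdY, h0a p h2, h0b p h2, hza p h2, hzb p h2])]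
    refine integral_congr_ae (Filter.Eventually.of_forall fun p => ?_)
    simp only [pdX, pdY, auxQ1]
    rcases eq_or_ne p.2 0 with h | h
    · simp [h]
    · field_simp
      ring
  have e2 : (∫ p in upperHalf,
        ((pdX a p - b p / p.2) ^ 2 + (pdY a p - a p / p.2) ^ 2
          + (pdX b p + a p / p.2) ^ 2 + (pdY b p - b p / p.2) ^ 2) / p.2 ^ 2)
      = ∫ p : ℝ × ℝ, auxQ2 a b p / p.2 ^ 4 := by
    rw [setIntegral_eq_integral_of_forall_compl_eq_zero (fun p hp => by
      have h2 : p.2 < ε := lt_of_le_of_lt (not_lt.mp hp) hε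
      simp [pdX, pdY, h0a p h2, h0b p h2, hza p h2, hzb p h2])]
    refine integral_congr_ae (Filter.Eventually.of_forall fun p => ?_)
    simp only [pdX, pdY, auxQ2]
    rcases eq_or_ne p.2 0 with h | h
    · simp [h]
    · field_simp
      ring
  have e3 : (∫ p in upperHalf, (a p ^ 2 + b p ^ 2) / p.2 ^ 4)
      = ∫ p : ℝ × ℝ, auxQ3 a b p / p.2 ^ 4 := by
    rw [setIntegral_eq_integral_of_forall_compl_eq_zero (fun p hp => by
      have h2 : p.2 < ε := lt_of_le_of_lt (not_lt.mp hp) hε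
      simp [h0a p h2, h0b p h2])]
    refine integral_congr_ae (Filter.Eventually.of_forall fun p => ?_)
    simp only [auxQ3]
    ring_nf
  rw [e1, e2, e3]
  -- the pointwise key identity
  have key : ∀ p : ℝ × ℝ, auxQ1 a b p / p.2 ^ 4
      = auxQ2 a b p / p.2 ^ 4 + auxQ3 a b p / p.2 ^ 4
        + (fderiv ℝ (auxPhi a b) p (1, 0) + fderiv ℝ (auxPsi a b) p (0, 1)) := by
    intro p
    rcases lt_or_ge p.2 ε with h | h
    · have hP : fderiv ℝ (auxPhi a b) p = 0 :=
        aux_fderiv_zero_of_lt (f := auxPhi a b) (fun q hq => by simp [auxPhi, h0QPhi q hq]) h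
      have hS : fderiv ℝ (auxPsi a b) p = 0 :=
        aux_fderiv_zero_of_lt (f := auxPsi a b) (fun q hq => by simp [auxPsi, h0QPsi q hq]) h
      rw [hP, hS]
      simp [h0Q1 p h, h0Q2 p h, h0Q3 p h]
    · have hy : p.2 ≠ 0 := (lt_of_lt_of_le hε h).ne'
      have hp : p ∈ upperHalf := lt_of_lt_of_le hε h
      have hdv := hdiv p hp
      have hbyy : fderiv ℝ b p (0, 1) = 2 * b p / p.2 - fderiv ℝ a p (1, 0) := by linarith
      -- differentiability of the numerators at p
      have dQPhi : DifferentiableAt ℝ (auxQPhi a b) p :=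
        ((((day p).mul (db p)).const_mul 2).mul differentiableAt_snd).sub
          (((da p).mul (db p)).const_mul 2)
      have dQPsi : DifferentiableAt ℝ (auxQPsi a b) p :=
        (((da p).mul (da p)).add ((db p).mul (db p))).sub
          ((((dax p).mul (db p)).const_mul 2).mul differentiableAt_snd)
      -- derivative of QPhi in the x direction
      have hQPhix : fderiv ℝ (auxQPhi a b) p (1, 0)
          = 2 * (fderiv ℝ (fun q => fderiv ℝ a q (0, 1)) p (1, 0) * b p
              + fderiv ℝ a p (0, 1) * fderiv ℝ b p (1, 0)) * p.2
            - 2 * (fderiv ℝ a p (1, 0) * b p + a p * fderiv ℝ b p (1, 0)) := by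
        show fderiv ℝ (fun q => 2 * (fderiv ℝ a q (0, 1) * b q) * q.2 - 2 * (a q * b q)) p (1, 0) = _
        rw [aux_pd_sub ((((day p).fun_mul (db p)).const_mul 2).fun_mul differentiableAt_snd)
              (((da p).fun_mul (db p)).const_mul 2) (1, 0),
            aux_pd_mul (((day p).fun_mul (db p)).const_mul 2) differentiableAt_snd (1, 0),
            aux_pd_const_mul ((day p).fun_mul (db p)) 2 (1, 0),
            aux_pd_mul (day p) (db p) (1, 0),
            aux_pd_const_mul ((da p).fun_mul (db p)) 2 (1, 0),
            aux_pd_mul (da p) (db p) (1, 0),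
            aux_pd_snd (1, 0)]
        norm_num
      -- derivative of QPsi in the y direction
      have hQPsiy : fderiv ℝ (auxQPsi a b) p (0, 1)
          = 2 * (a p * fderiv ℝ a p (0, 1)) + 2 * (b p * fderiv ℝ b p (0, 1))
            - 2 * (fderiv ℝ (fun q => fderiv ℝ a q (1, 0)) p (0, 1) * b p
              + fderiv ℝ a p (1, 0) * fderiv ℝ b p (0, 1)) * p.2
            - 2 * (fderiv ℝ a p (1, 0) * b p) := by
        show fderiv ℝ (fun q => a q * a q + b q * b q
            - 2 * (fderiv ℝ a q (1, 0) * b q) * q.2) p (0, 1) = _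
        rw [aux_pd_sub (((da p).fun_mul (da p)).fun_add ((db p).fun_mul (db p)))
              ((((dax p).fun_mul (db p)).const_mul 2).fun_mul differentiableAt_snd) (0, 1),
            aux_pd_add ((da p).fun_mul (da p)) ((db p).fun_mul (db p)) (0, 1),
            aux_pd_mul (da p) (da p) (0, 1),
            aux_pd_mul (db p) (db p) (0, 1),
            aux_pd_mul (((dax p).fun_mul (db p)).const_mul 2) differentiableAt_snd (0, 1),
            aux_pd_const_mul ((dax p).fun_mul (db p)) 2 (0, 1),
            aux_pd_mul (dax p) (db p) (0, 1),
            aux_pd_snd (0, 1)]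
        norm_num
        ring
      -- derivatives of the potentials
      have hPhiX : fderiv ℝ (auxPhi a b) p (1, 0)
          = (2 * (fderiv ℝ (fun q => fderiv ℝ a q (0, 1)) p (1, 0) * b p
              + fderiv ℝ a p (0, 1) * fderiv ℝ b p (1, 0)) * p.2
            - 2 * (fderiv ℝ a p (1, 0) * b p + a p * fderiv ℝ b p (1, 0))) / p.2 ^ 3 := by
        have hq := aux_pd_div3 dQPhi hy (1, 0)
        have e : auxPhi a b = fun q => auxQPhi a b q / q.2 ^ 3 := rfl
        rw [e, hq, hQPhix]
        norm_num
      have hPsiY : fderiv ℝ (auxPsi a b) p (0, 1)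
          = (2 * (a p * fderiv ℝ a p (0, 1)) + 2 * (b p * fderiv ℝ b p (0, 1))
            - 2 * (fderiv ℝ (fun q => fderiv ℝ a q (1, 0)) p (0, 1) * b p
              + fderiv ℝ a p (1, 0) * fderiv ℝ b p (0, 1)) * p.2
            - 2 * (fderiv ℝ a p (1, 0) * b p)) / p.2 ^ 3
            - 3 * (a p * a p + b p * b p
              - 2 * (fderiv ℝ a p (1, 0) * b p) * p.2) / p.2 ^ 4 := by
        have hq := aux_pd_div3 dQPsi hy (0, 1)
        have e : auxPsi a b = fun q => auxQPsi a b q / q.2 ^ 3 := rfl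
        rw [e, hq, hQPsiy]
        simp only [auxQPsi]
        norm_num
      rw [hPhiX, hPsiY, aux_pd_comm ha p (0, 1) (1, 0)]
      simp only [auxQ1, auxQ2, auxQ3]
      rw [hbyy]
      set y := p.2 with hydef
      set A := a p with hAdef
      set B := b p with hBdef
      set ax := fderiv ℝ a p (1, 0) with haxdef
      set ay := fderiv ℝ a p (0, 1) with haydef
      set bx := fderiv ℝ b p (1, 0) with hbxdef
      set axy := fderiv ℝ (fun q => fderiv ℝ a q (0, 1)) p (1, 0) with haxydef
      have hy' : y ≠ 0 := hy
      field_simp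
      ring
  have keyfun : (fun p : ℝ × ℝ => auxQ1 a b p / p.2 ^ 4)
      = fun p : ℝ × ℝ => auxQ2 a b p / p.2 ^ 4 + auxQ3 a b p / p.2 ^ 4
        + (fderiv ℝ (auxPhi a b) p (1, 0) + fderiv ℝ (auxPsi a b) p (0, 1)) := funext key
  have hi23 : Integrable (fun p : ℝ × ℝ => auxQ2 a b p / p.2 ^ 4 + auxQ3 a b p / p.2 ^ 4)
      volume := hi2.add hi3
  have hiPP : Integrable (fun p : ℝ × ℝ =>
      fderiv ℝ (auxPhi a b) p (1, 0) + fderiv ℝ (auxPsi a b) p (0, 1)) volume := hiPhi.add hiPsi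
  rw [keyfun, integral_add hi23 hiPP, integral_add hi2 hi3, integral_add hiPhi hiPsi,
    hzPhi, hzPsi]
  ring
end

section
/- Let a,b be smooth real-valued functions on ℝ² compactly supported in the open upper half-plane and divergence-free in the hyperbolic sense, i.e. ∂ₓa + ∂_y b − 2b/y = 0 on {y>0}. Then, with M11 = ∂ₓa − b/y, M12 = ∂_y a − a/y, M21 = ∂ₓb + a/y, M22 = ∂_y b − b/y, the deformation and Hodge dissipation forms differ by exactly twice the squared hyperbolic L² norm: ∫∫_{y>0} [2·M11² + 2·M22² + (M12 + M21)²]·y⁻² dx dy = ∫∫_{y>0} (M21 − M12)²·y⁻² dx dy + 2·∫∫_{y>0} (a² + b²)·y⁻⁴ dx dy. (This is the quadratic-form expression of the operator identity Δ_Def = Δ_H + 2·Ric on divergence-free fields, with Ric = −1 on ℍ².) -/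
open MeasureTheory Set Filter Topology
open scoped ContDiff

lemma one_le_inftyWT : (1 : WithTop ℕ∞) ≤ ∞ := by exact_mod_cast (le_top : (1 : ℕ∞) ≤ ⊤)




lemma integral_deriv_eq_zero1D {f : ℝ → ℝ} (hf : ContDiff ℝ 1 f) (hcf : HasCompactSupport f) :
    ∫ x, deriv f x = 0 := by
  have hi : Integrable (deriv f) :=
    (hf.continuous_deriv le_rfl).integrable_of_hasCompactSupport hcf.deriv
  rw [← intervalIntegral.integral_Iic_add_Ioi (b := (0:ℝ)) hi.integrableOn hi.integrableOn,
    hcf.integral_Iic_deriv_eq hf 0, hcf.integral_Ioi_deriv_eq hf 0]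
  ring

lemma smooth_pdX {f : ℝ × ℝ → ℝ} (hf : ContDiff ℝ ∞ f) : ContDiff ℝ ∞ (pdX f) :=
  (hf.fderiv_right (m := ∞) (le_of_eq rfl)).clm_apply contDiff_const

lemma smooth_pdY {f : ℝ × ℝ → ℝ} (hf : ContDiff ℝ ∞ f) : ContDiff ℝ ∞ (pdY f) :=
  (hf.fderiv_right (m := ∞) (le_of_eq rfl)).clm_apply contDiff_const

lemma hcs_pdX {f : ℝ × ℝ → ℝ} (hcf : HasCompactSupport f) : HasCompactSupport (pdX f) :=
  hcf.fderiv_apply ℝ (1, 0)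

lemma hcs_pdY {f : ℝ × ℝ → ℝ} (hcf : HasCompactSupport f) : HasCompactSupport (pdY f) :=
  hcf.fderiv_apply ℝ (0, 1)

lemma closedEmb_x (y : ℝ) : IsClosedEmbedding (fun x : ℝ => (x, y)) :=
  (Isometry.of_dist_eq fun x₁ x₂ => by
    simp [Prod.dist_eq, dist_self, max_eq_left dist_nonneg]).isClosedEmbedding

lemma closedEmb_y (x : ℝ) : IsClosedEmbedding (fun y : ℝ => (x, y)) :=
  (Isometry.of_dist_eq fun y₁ y₂ => by
    simp [Prod.dist_eq, dist_self, max_eq_right dist_nonneg]).isClosedEmbedding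

lemma integral_pdX_eq_zero {f : ℝ × ℝ → ℝ} (hf : ContDiff ℝ ∞ f)
    (hcf : HasCompactSupport f) : ∫ p : ℝ × ℝ, pdX f p = 0 := by
  have hint : Integrable (pdX f) :=
    (smooth_pdX hf).continuous.integrable_of_hasCompactSupport (hcs_pdX hcf)
  have hint' : Integrable (pdX f) (volume.prod volume) := by
    rwa [← Measure.volume_eq_prod]
  have inner0 : ∀ y : ℝ, ∫ x : ℝ, pdX f (x, y) = 0 := by
    intro y
    have hder : ∀ x : ℝ, HasDerivAt (fun x => f (x, y)) (pdX f (x, y)) x := by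
      intro x
      have h1 : HasFDerivAt (fun t : ℝ => (t, y)) ((ContinuousLinearMap.id ℝ ℝ).prod 0) x :=
        HasFDerivAt.prodMk (hasFDerivAt_id x) (hasFDerivAt_const y x)
      have h2 := ((hf.differentiable (by simp) (x, y)).hasFDerivAt).comp x h1
      simpa [pdX, Function.comp_def] using h2.hasDerivAt
    have hg : ContDiff ℝ 1 (fun x => f (x, y)) :=
      (hf.of_le one_le_inftyWT).comp (contDiff_id.prodMk contDiff_const)
    have hcg : HasCompactSupport (fun x => f (x, y)) :=
      hcf.comp_isClosedEmbedding (closedEmb_x y)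
    have : (fun x => pdX f (x, y)) = deriv (fun x => f (x, y)) :=
      funext fun x => ((hder x).deriv).symm
    rw [this, integral_deriv_eq_zero1D hg hcg]
  calc ∫ p : ℝ × ℝ, pdX f p = ∫ x, ∫ y, pdX f (x, y) := by
        rw [Measure.volume_eq_prod]; exact integral_prod _ hint'
    _ = ∫ y, ∫ x, pdX f (x, y) := integral_integral_swap hint'
    _ = 0 := by simp [inner0]

lemma integral_pdY_eq_zero {f : ℝ × ℝ → ℝ} (hf : ContDiff ℝ ∞ f)
    (hcf : HasCompactSupport f) : ∫ p : ℝ × ℝ, pdY f p = 0 := by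
  have hint' : Integrable (pdY f) (volume.prod volume) := by
    rw [← Measure.volume_eq_prod]
    exact (smooth_pdY hf).continuous.integrable_of_hasCompactSupport (hcs_pdY hcf)
  have inner0 : ∀ x : ℝ, ∫ y : ℝ, pdY f (x, y) = 0 := by
    intro x
    have hder : ∀ y : ℝ, HasDerivAt (fun y => f (x, y)) (pdY f (x, y)) y := by
      intro y
      have h1 : HasFDerivAt (fun t : ℝ => (x, t)) ((0 : ℝ →L[ℝ] ℝ).prod (ContinuousLinearMap.id ℝ ℝ)) y :=
        HasFDerivAt.prodMk (hasFDerivAt_const x y) (hasFDerivAt_id y)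
      have h2 := ((hf.differentiable (by simp) (x, y)).hasFDerivAt).comp y h1
      simpa [pdY, Function.comp_def] using h2.hasDerivAt
    have hg : ContDiff ℝ 1 (fun y => f (x, y)) :=
      (hf.of_le one_le_inftyWT).comp (contDiff_const.prodMk contDiff_id)
    have hcg : HasCompactSupport (fun y => f (x, y)) :=
      hcf.comp_isClosedEmbedding (closedEmb_y x)
    have : (fun y => pdY f (x, y)) = deriv (fun y => f (x, y)) :=
      funext fun y => ((hder y).deriv).symm
    rw [this, integral_deriv_eq_zero1D hg hcg]
  calc ∫ p : ℝ × ℝ, pdY f p = ∫ x, ∫ y, pdY f (x, y) := by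
        rw [Measure.volume_eq_prod]; exact integral_prod _ hint'
    _ = 0 := by simp [inner0]


lemma key_pointwise (a b R P Q : ℝ × ℝ → ℝ) (p : ℝ × ℝ)
    (ha : ContDiff ℝ (⊤ : ℕ∞) a) (hb : ContDiff ℝ (⊤ : ℕ∞) b)
    (hy : 0 < p.2)
    (hR : R =ᶠ[𝓝 p] fun q => (q.2)⁻¹)
    (hdiv : (fun q => fderiv ℝ a q (1, 0) + fderiv ℝ b q (0, 1) - 2 * (b q * R q))
        =ᶠ[𝓝 p] fun _ => 0)
    (hPdef : P = fun q => (a q * (fderiv ℝ a q (1, 0) - b q * R q)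
        + b q * (fderiv ℝ a q (0, 1) - a q * R q)) * (R q * R q))
    (hQdef : Q = fun q => (a q * (fderiv ℝ b q (1, 0) + a q * R q)
        + b q * (fderiv ℝ b q (0, 1) - b q * R q)) * (R q * R q)) :
    (2 * (fderiv ℝ a p (1, 0) - b p * R p) ^ 2 + 2 * (fderiv ℝ b p (0, 1) - b p * R p) ^ 2
        + ((fderiv ℝ a p (0, 1) - a p * R p) + (fderiv ℝ b p (1, 0) + a p * R p)) ^ 2)
        * (R p * R p)
      - ((fderiv ℝ b p (1, 0) + a p * R p) - (fderiv ℝ a p (0, 1) - a p * R p)) ^ 2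
        * (R p * R p)
      - 2 * ((a p ^ 2 + b p ^ 2) * (R p * R p * (R p * R p)))
      = 2 * (fderiv ℝ P p (1, 0) + fderiv ℝ Q p (0, 1)) := by
  have hyne : p.2 ≠ 0 := hy.ne'
  have hRp : R p = (p.2)⁻¹ := hR.eq_of_nhds
  have hA : HasFDerivAt a (fderiv ℝ a p) p := (ha.differentiable (by simp) p).hasFDerivAt
  have hB : HasFDerivAt b (fderiv ℝ b p) p := (hb.differentiable (by simp) p).hasFDerivAt
  have hdA : HasFDerivAt (fderiv ℝ a) (fderiv ℝ (fderiv ℝ a) p) p :=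
    (((ha.fderiv_right (m := ∞) (by simp)).differentiable (by simp)) p).hasFDerivAt
  have hdB : HasFDerivAt (fderiv ℝ b) (fderiv ℝ (fderiv ℝ b) p) p :=
    (((hb.fderiv_right (m := ∞) (by simp)).differentiable (by simp)) p).hasFDerivAt
  have hAX := hdA.clm_apply (hasFDerivAt_const ((1:ℝ), (0:ℝ)) p)
  have hAY := hdA.clm_apply (hasFDerivAt_const ((0:ℝ), (1:ℝ)) p)
  have hBX := hdB.clm_apply (hasFDerivAt_const ((1:ℝ), (0:ℝ)) p)
  have hBY := hdB.clm_apply (hasFDerivAt_const ((0:ℝ), (1:ℝ)) p)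
  have hRd : HasFDerivAt R
      ((ContinuousLinearMap.smulRight (1 : ℝ →L[ℝ] ℝ) (-(p.2 ^ 2)⁻¹)).comp
        (ContinuousLinearMap.snd ℝ ℝ ℝ)) p :=
    ((hasFDerivAt_inv hyne).comp p hasFDerivAt_snd).congr_of_eventuallyEq hR
  -- divergence constraints
  have hD0 : HasFDerivAt
      (fun q => fderiv ℝ a q (1, 0) + fderiv ℝ b q (0, 1) - 2 * (b q * R q))
      (0 : (ℝ × ℝ) →L[ℝ] ℝ) p := (hasFDerivAt_const (0:ℝ) p).congr_of_eventuallyEq hdiv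
  have hDeq := ((hAX.add hBY).sub ((hB.mul hRd).const_mul 2)).unique hD0
  have hC1 := congrArg (fun L : (ℝ × ℝ) →L[ℝ] ℝ => L (1, 0)) hDeq
  have hC2 := congrArg (fun L : (ℝ × ℝ) →L[ℝ] ℝ => L (0, 1)) hDeq
  simp only [ContinuousLinearMap.add_apply, ContinuousLinearMap.sub_apply,
    ContinuousLinearMap.comp_apply, ContinuousLinearMap.smul_apply,
    ContinuousLinearMap.flip_apply, ContinuousLinearMap.smulRight_apply,
    ContinuousLinearMap.coe_snd', ContinuousLinearMap.one_apply,
    ContinuousLinearMap.zero_apply, ContinuousLinearMap.comp_zero, smul_eq_mul,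
    map_zero, add_zero, zero_add, mul_zero, zero_mul,
    mul_one, one_mul] at hC1 hC2
  -- symmetry of second derivatives
  have hsymA : fderiv ℝ (fderiv ℝ a) p (1, 0) (0, 1) = fderiv ℝ (fderiv ℝ a) p (0, 1) (1, 0) :=
    second_derivative_symmetric (fun q => (ha.differentiable (by simp) q).hasFDerivAt) hdA _ _
  have hsymB : fderiv ℝ (fderiv ℝ b) p (1, 0) (0, 1) = fderiv ℝ (fderiv ℝ b) p (0, 1) (1, 0) :=
    second_derivative_symmetric (fun q => (hb.differentiable (by simp) q).hasFDerivAt) hdB _ _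
  rw [hsymB] at hC1
  rw [← hsymA] at hC2
  -- derivative of P in direction (1,0)
  obtain ⟨LP, hLP, hLPval⟩ : ∃ L : (ℝ × ℝ) →L[ℝ] ℝ, HasFDerivAt P L p ∧
      L (1, 0) = (fderiv ℝ a p (1, 0) * (fderiv ℝ a p (1, 0) - b p * R p)
        + a p * (fderiv ℝ (fderiv ℝ a) p (1, 0) (1, 0) - fderiv ℝ b p (1, 0) * R p)
        + fderiv ℝ b p (1, 0) * (fderiv ℝ a p (0, 1) - a p * R p)
        + b p * (fderiv ℝ (fderiv ℝ a) p (1, 0) (0, 1) - fderiv ℝ a p (1, 0) * R p))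
        * (R p * R p) := by
    have hP' := ((hA.mul (hAX.sub (hB.mul hRd))).add
      (hB.mul (hAY.sub (hA.mul hRd)))).mul (hRd.mul hRd)
    refine ⟨_, by rw [hPdef]; exact hP', ?_⟩
    simp [ContinuousLinearMap.add_apply, ContinuousLinearMap.comp_apply,
      ContinuousLinearMap.smul_apply, ContinuousLinearMap.flip_apply,
      ContinuousLinearMap.smulRight_apply, ContinuousLinearMap.coe_snd',
      ContinuousLinearMap.one_apply, smul_eq_mul]
    ring
  -- derivative of Q in direction (0,1)
  obtain ⟨LQ, hLQ, hLQval⟩ : ∃ L : (ℝ × ℝ) →L[ℝ] ℝ, HasFDerivAt Q L p ∧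
      L (0, 1) = (a p * (fderiv ℝ b p (1, 0) + a p * R p)
          + b p * (fderiv ℝ b p (0, 1) - b p * R p))
          * (R p * (-(p.2 ^ 2)⁻¹) + R p * (-(p.2 ^ 2)⁻¹))
        + (fderiv ℝ a p (0, 1) * (fderiv ℝ b p (1, 0) + a p * R p)
          + a p * (fderiv ℝ (fderiv ℝ b) p (0, 1) (1, 0)
            + (fderiv ℝ a p (0, 1) * R p + a p * (-(p.2 ^ 2)⁻¹)))
          + fderiv ℝ b p (0, 1) * (fderiv ℝ b p (0, 1) - b p * R p)
          + b p * (fderiv ℝ (fderiv ℝ b) p (0, 1) (0, 1)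
            - (fderiv ℝ b p (0, 1) * R p + b p * (-(p.2 ^ 2)⁻¹))))
          * (R p * R p) := by
    have hQ' := ((hA.mul (hBX.add (hA.mul hRd))).add
      (hB.mul (hBY.sub (hB.mul hRd)))).mul (hRd.mul hRd)
    refine ⟨_, by rw [hQdef]; exact hQ', ?_⟩
    simp [ContinuousLinearMap.add_apply, ContinuousLinearMap.comp_apply,
      ContinuousLinearMap.smul_apply, ContinuousLinearMap.flip_apply,
      ContinuousLinearMap.smulRight_apply, ContinuousLinearMap.coe_snd',
      ContinuousLinearMap.one_apply, smul_eq_mul]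
    ring
  rw [hLP.fderiv, hLQ.fderiv, hLPval, hLQval, hRp]
  rw [hRp] at hC1 hC2
  linear_combination (-2 * a p * ((p.2)⁻¹ * (p.2)⁻¹)) * hC1
    + (-2 * b p * ((p.2)⁻¹ * (p.2)⁻¹)) * hC2


/-- For a divergence-free compactly supported field `u = (a,b)` on `ℍ²`, the deformation
and Hodge dissipation forms differ by exactly twice the squared hyperbolic `L²` norm:
the quadratic-form expression of `Δ_Def = Δ_H + 2 Ric` with `Ric = −1` on `ℍ²`. -/
theorem deformation_vs_hodge_dissipation_on_H2
    (a b : ℝ × ℝ → ℝ)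
    (ha : ContDiff ℝ (⊤ : ℕ∞) a) (hb : ContDiff ℝ (⊤ : ℕ∞) b)
    (hca : HasCompactSupport a) (hcb : HasCompactSupport b)
    (hsa : tsupport a ⊆ upperHalf) (hsb : tsupport b ⊆ upperHalf)
    (hdiv : ∀ p ∈ upperHalf, pdX a p + pdY b p - 2 * b p / p.2 = 0) :
    ∫ p in upperHalf,
        (2 * (pdX a p - b p / p.2) ^ 2 + 2 * (pdY b p - b p / p.2) ^ 2
          + ((pdY a p - a p / p.2) + (pdX b p + a p / p.2)) ^ 2) / p.2 ^ 2
      = (∫ p in upperHalf,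
          ((pdX b p + a p / p.2) - (pdY a p - a p / p.2)) ^ 2 / p.2 ^ 2)
        + 2 * ∫ p in upperHalf, (a p ^ 2 + b p ^ 2) / p.2 ^ 4 := by
  classical
  set K : Set (ℝ × ℝ) := tsupport a ∪ tsupport b with hKdef
  have hK : IsCompact K := hca.union hcb
  have hKU : K ⊆ upperHalf := union_subset hsa hsb
  obtain ⟨ε, hε, hKε⟩ : ∃ ε : ℝ, 0 < ε ∧ ∀ q ∈ K, ε ≤ q.2 := by
    rcases K.eq_empty_or_nonempty with h | h
    · exact ⟨1, one_pos, by simp [h]⟩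
    · obtain ⟨q₀, hq₀, hmin⟩ := hK.exists_isMinOn h (continuous_snd.continuousOn)
      exact ⟨q₀.2, hKU hq₀, fun q hq => hmin hq⟩
  set c : ℝ := ε / 4 with hcdef
  have hc : 0 < c := by positivity
  set d : ℝ → ℝ := fun y => c + (y - c) * Real.smoothTransition ((y - c) / c) with hddef
  have hdpos : ∀ y, 0 < d y := by
    intro y
    rcases le_or_gt y c with h | h
    · have h0 : Real.smoothTransition ((y - c) / c) = 0 :=
        Real.smoothTransition.zero_of_nonpos
          (div_nonpos_of_nonpos_of_nonneg (sub_nonpos.2 h) hc.le)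
      simp only [hddef, h0, mul_zero, add_zero]; exact hc
    · have h1 : 0 ≤ (y - c) * Real.smoothTransition ((y - c) / c) :=
        mul_nonneg (by linarith) (Real.smoothTransition.nonneg _)
      simp only [hddef]; linarith
  have hdeq : ∀ y : ℝ, 2 * c ≤ y → d y = y := by
    intro y hy
    have h1 : (1:ℝ) ≤ (y - c) / c := (le_div_iff₀ hc).2 (by linarith)
    simp only [hddef, Real.smoothTransition.one_of_one_le h1]; ring
  have harg : ContDiff ℝ ∞ (fun y : ℝ => (y - c) / c) :=
    (contDiff_id.sub contDiff_const).div_const c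
  have hdsm : ContDiff ℝ ∞ d :=
    contDiff_const.add ((contDiff_id.sub contDiff_const).mul
      (Real.smoothTransition.contDiff.comp harg))
  set R : ℝ × ℝ → ℝ := fun q => (d q.2)⁻¹ with hRdef
  have hRsm : ContDiff ℝ ∞ R := (hdsm.comp contDiff_snd).inv fun q => (hdpos q.2).ne'
  have ha' : ContDiff ℝ ∞ a := ha.of_le (by simp)
  have hb' : ContDiff ℝ ∞ b := hb.of_le (by simp)
  have hReq : ∀ q : ℝ × ℝ, 2 * c ≤ q.2 → R q = (q.2)⁻¹ := by
    intro q h; simp only [hRdef]; rw [hdeq _ h]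
  have hvan : ∀ q, q ∉ K → a q = 0 ∧ b q = 0 ∧ fderiv ℝ a q = 0 ∧ fderiv ℝ b q = 0 := by
    intro q hq
    have hqa : q ∉ tsupport a := fun h => hq (Or.inl h)
    have hqb : q ∉ tsupport b := fun h => hq (Or.inr h)
    exact ⟨image_eq_zero_of_notMem_tsupport hqa, image_eq_zero_of_notMem_tsupport hqb,
      fderiv_of_notMem_tsupport _ hqa, fderiv_of_notMem_tsupport _ hqb⟩
  have hKq2 : ∀ q ∈ K, (0:ℝ) < q.2 := fun q hq => lt_of_lt_of_le hε (hKε q hq)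
  have hK2c : ∀ q ∈ K, 2 * c ≤ q.2 := fun q hq => by
    have := hKε q hq; simp only [hcdef] at *; linarith
  -- global functions
  set P : ℝ × ℝ → ℝ := fun q => (a q * (fderiv ℝ a q (1, 0) - b q * R q)
      + b q * (fderiv ℝ a q (0, 1) - a q * R q)) * (R q * R q) with hPdef
  set Q : ℝ × ℝ → ℝ := fun q => (a q * (fderiv ℝ b q (1, 0) + a q * R q)
      + b q * (fderiv ℝ b q (0, 1) - b q * R q)) * (R q * R q) with hQdef
  set G1 : ℝ × ℝ → ℝ := fun q => (2 * (fderiv ℝ a q (1, 0) - b q * R q) ^ 2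
      + 2 * (fderiv ℝ b q (0, 1) - b q * R q) ^ 2
      + ((fderiv ℝ a q (0, 1) - a q * R q) + (fderiv ℝ b q (1, 0) + a q * R q)) ^ 2)
      * (R q * R q) with hG1def
  set G2 : ℝ × ℝ → ℝ := fun q => ((fderiv ℝ b q (1, 0) + a q * R q)
      - (fderiv ℝ a q (0, 1) - a q * R q)) ^ 2 * (R q * R q) with hG2def
  set G3 : ℝ × ℝ → ℝ := fun q => (a q ^ 2 + b q ^ 2) * (R q * R q * (R q * R q)) with hG3def
  -- smoothness
  have hax : ContDiff ℝ ∞ (fun q : ℝ × ℝ => fderiv ℝ a q (1, 0)) :=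
    (ha'.fderiv_right (m := ∞) (le_of_eq rfl)).clm_apply contDiff_const
  have hay : ContDiff ℝ ∞ (fun q : ℝ × ℝ => fderiv ℝ a q (0, 1)) :=
    (ha'.fderiv_right (m := ∞) (le_of_eq rfl)).clm_apply contDiff_const
  have hbx : ContDiff ℝ ∞ (fun q : ℝ × ℝ => fderiv ℝ b q (1, 0)) :=
    (hb'.fderiv_right (m := ∞) (le_of_eq rfl)).clm_apply contDiff_const
  have hby : ContDiff ℝ ∞ (fun q : ℝ × ℝ => fderiv ℝ b q (0, 1)) :=
    (hb'.fderiv_right (m := ∞) (le_of_eq rfl)).clm_apply contDiff_const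
  have hPsm : ContDiff ℝ ∞ P := by
    rw [hPdef]
    exact ((ha'.mul (hax.sub (hb'.mul hRsm))).add
      (hb'.mul (hay.sub (ha'.mul hRsm)))).mul (hRsm.mul hRsm)
  have hQsm : ContDiff ℝ ∞ Q := by
    rw [hQdef]
    exact ((ha'.mul (hbx.add (ha'.mul hRsm))).add
      (hb'.mul (hby.sub (hb'.mul hRsm)))).mul (hRsm.mul hRsm)
  have hG2sm : ContDiff ℝ ∞ G2 := by
    rw [hG2def]
    exact (((hbx.add (ha'.mul hRsm)).sub (hay.sub (ha'.mul hRsm))).pow 2).mul (hRsm.mul hRsm)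
  have hG3sm : ContDiff ℝ ∞ G3 := by
    rw [hG3def]
    exact ((ha'.pow 2).add (hb'.pow 2)).mul ((hRsm.mul hRsm).mul (hRsm.mul hRsm))
  -- compact supports
  have hPcs : HasCompactSupport P := HasCompactSupport.intro hK fun q hq => by
    obtain ⟨h1, h2, h3, h4⟩ := hvan q hq; simp [hPdef, h1, h2]
  have hQcs : HasCompactSupport Q := HasCompactSupport.intro hK fun q hq => by
    obtain ⟨h1, h2, h3, h4⟩ := hvan q hq; simp [hQdef, h1, h2]
  have hG2cs : HasCompactSupport G2 := HasCompactSupport.intro hK fun q hq => by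
    obtain ⟨h1, h2, h3, h4⟩ := hvan q hq; simp [pdX, pdY, hG2def, h1, h2, h3, h4]
  have hG3cs : HasCompactSupport G3 := HasCompactSupport.intro hK fun q hq => by
    obtain ⟨h1, h2, h3, h4⟩ := hvan q hq; simp [hG3def, h1, h2]
  have hUH : IsOpen upperHalf := isOpen_lt continuous_const continuous_snd
  -- integral conversions
  have e1 : (∫ p in upperHalf,
        (2 * (pdX a p - b p / p.2) ^ 2 + 2 * (pdY b p - b p / p.2) ^ 2
          + ((pdY a p - a p / p.2) + (pdX b p + a p / p.2)) ^ 2) / p.2 ^ 2)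
      = ∫ q, G1 q := by
    rw [setIntegral_congr_fun hUH.measurableSet (g := G1) ?_]
    · exact setIntegral_eq_integral_of_forall_compl_eq_zero fun q hq => by
        obtain ⟨h1, h2, h3, h4⟩ := hvan q (fun hK' => hq (hKU hK'))
        simp [pdX, pdY, hG1def, h1, h2, h3, h4]
    · intro q hq
      by_cases hqK : q ∈ K
      · have hq2 : q.2 ≠ 0 := (hKq2 q hqK).ne'
        simp only [pdX, pdY, hG1def, hReq q (hK2c q hqK), div_eq_mul_inv]
        ring
      · obtain ⟨h1, h2, h3, h4⟩ := hvan q hqK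
        simp [pdX, pdY, hG1def, h1, h2, h3, h4]
  have e2 : (∫ p in upperHalf,
        ((pdX b p + a p / p.2) - (pdY a p - a p / p.2)) ^ 2 / p.2 ^ 2) = ∫ q, G2 q := by
    rw [setIntegral_congr_fun hUH.measurableSet (g := G2) ?_]
    · exact setIntegral_eq_integral_of_forall_compl_eq_zero fun q hq => by
        obtain ⟨h1, h2, h3, h4⟩ := hvan q (fun hK' => hq (hKU hK'))
        simp [pdX, pdY, hG2def, h1, h2, h3, h4]
    · intro q hq
      by_cases hqK : q ∈ K
      · have hq2 : q.2 ≠ 0 := (hKq2 q hqK).ne'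
        simp only [pdX, pdY, hG2def, hReq q (hK2c q hqK), div_eq_mul_inv]
        ring
      · obtain ⟨h1, h2, h3, h4⟩ := hvan q hqK
        simp [pdX, pdY, hG2def, h1, h2, h3, h4]
  have e3 : (∫ p in upperHalf, (a p ^ 2 + b p ^ 2) / p.2 ^ 4) = ∫ q, G3 q := by
    rw [setIntegral_congr_fun hUH.measurableSet (g := G3) ?_]
    · exact setIntegral_eq_integral_of_forall_compl_eq_zero fun q hq => by
        obtain ⟨h1, h2, h3, h4⟩ := hvan q (fun hK' => hq (hKU hK'))
        simp [hG3def, h1, h2]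
    · intro q hq
      by_cases hqK : q ∈ K
      · have hq2 : q.2 ≠ 0 := (hKq2 q hqK).ne'
        simp only [hG3def, hReq q (hK2c q hqK), div_eq_mul_inv]
        ring
      · obtain ⟨h1, h2, h3, h4⟩ := hvan q hqK
        simp [hG3def, h1, h2]
  -- pointwise identity
  have hsuppP : tsupport P ⊆ K := by
    apply closure_minimal _ hK.isClosed
    intro x hx
    by_contra hxK
    obtain ⟨h1, h2, _, _⟩ := hvan x hxK
    exact hx (by simp [hPdef, h1, h2])
  have hsuppQ : tsupport Q ⊆ K := by
    apply closure_minimal _ hK.isClosed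
    intro x hx
    by_contra hxK
    obtain ⟨h1, h2, _, _⟩ := hvan x hxK
    exact hx (by simp [hQdef, h1, h2])
  have hU2 : IsOpen {x : ℝ × ℝ | 2 * c < x.2} := isOpen_lt continuous_const continuous_snd
  have hpt : ∀ q, G1 q - G2 q - 2 * G3 q = 2 * (pdX P q + pdY Q q) := by
    intro q
    by_cases hqK : q ∈ K
    · have hqU : q ∈ {x : ℝ × ℝ | 2 * c < x.2} := by
        have h1 := hKε q hqK; simp only [mem_setOf_eq, hcdef] at *; linarith
      have hRev : R =ᶠ[𝓝 q] fun x => (x.2)⁻¹ :=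
        eventuallyEq_of_mem (hU2.mem_nhds hqU) fun x hx => hReq x (le_of_lt hx)
      have hdivev : (fun x => fderiv ℝ a x (1, 0) + fderiv ℝ b x (0, 1) - 2 * (b x * R x))
          =ᶠ[𝓝 q] fun _ => 0 := by
        refine eventuallyEq_of_mem (hU2.mem_nhds hqU) fun x hx => ?_
        have hx2 : (0:ℝ) < x.2 := lt_trans (by positivity) hx
        have h0 := hdiv x hx2
        simp only [pdX, pdY] at h0
        rw [hReq x (le_of_lt hx)]
        linear_combination h0
      have hkey := key_pointwise a b R P Q q ha hb (hKq2 q hqK) hRev hdivev hPdef hQdef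
      simp only [pdX, pdY, hG1def, hG2def, hG3def]
      exact hkey
    · obtain ⟨h1, h2, h3, h4⟩ := hvan q hqK
      have hPz : pdX P q = 0 := by
        simp only [pdX]
        rw [fderiv_of_notMem_tsupport _ fun h => hqK (hsuppP h)]
        simp
      have hQz : pdY Q q = 0 := by
        simp only [pdY]
        rw [fderiv_of_notMem_tsupport _ fun h => hqK (hsuppQ h)]
        simp
      rw [hPz, hQz]
      simp [hG1def, hG2def, hG3def, h1, h2, h3, h4]
  -- integrability
  have iG2 : Integrable G2 := hG2sm.continuous.integrable_of_hasCompactSupport hG2cs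
  have iG3 : Integrable G3 := hG3sm.continuous.integrable_of_hasCompactSupport hG3cs
  have iPX : Integrable (pdX P) :=
    (smooth_pdX hPsm).continuous.integrable_of_hasCompactSupport (hcs_pdX hPcs)
  have iQY : Integrable (pdY Q) :=
    (smooth_pdY hQsm).continuous.integrable_of_hasCompactSupport (hcs_pdY hQcs)
  rw [e1, e2, e3]
  have hint : ∫ q : ℝ × ℝ, G1 q
      = ∫ q : ℝ × ℝ, ((G2 q + 2 * G3 q) + 2 * (pdX P q + pdY Q q)) := by
    congr 1
    funext q
    linarith [hpt q]
  have i2G3 : Integrable (fun q : ℝ × ℝ => 2 * G3 q) := iG3.const_mul 2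
  have i23 : Integrable (fun q : ℝ × ℝ => G2 q + 2 * G3 q) := iG2.add i2G3
  have i2PQ : Integrable (fun q : ℝ × ℝ => 2 * (pdX P q + pdY Q q)) :=
    (iPX.add iQY).const_mul 2
  rw [hint, integral_add i23 i2PQ, integral_add iG2 i2G3, integral_const_mul,
    integral_const_mul, integral_add iPX iQY, integral_pdX_eq_zero hPsm hPcs,
    integral_pdY_eq_zero hQsm hQcs]
  ring
end

section
/- Let a,b be smooth real-valued functions on ℝ² compactly supported in the open upper half-plane and divergence-free in the hyperbolic sense, i.e. ∂ₓa + ∂_y b − 2b/y = 0 on {y>0}. Then, with M11 = ∂ₓa − b/y, M12 = ∂_y a − a/y, M21 = ∂ₓb + a/y, M22 = ∂_y b − b/y, one has the Poincaré-type inequality ∫∫_{y>0} (a² + b²)·y⁻⁴ dx dy ≤ ∫∫_{y>0} [M11² + M12² + M21² + M22²]·y⁻² dx dy. (In invariant form: ‖u‖²_{L²(ℍ²)} ≤ ‖∇u‖²_{L²(ℍ²)} for divergence-free compactly supported fields on ℍ², a consequence of the nonnegativity of the Hodge dissipation form ‖du♭‖².) -/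
open MeasureTheory

/- ### Auxiliary material -/

/-- The flux function in the `x` direction. -/
noncomputable def auxF (a b : ℝ × ℝ → ℝ) (q : ℝ × ℝ) : ℝ :=
  (2 * fderiv ℝ a q (0, 1) * q.2 - 2 * a q) * b q * (q.2 ^ 3)⁻¹

/-- The flux function in the `y` direction. -/
noncomputable def auxG (a b : ℝ × ℝ → ℝ) (q : ℝ × ℝ) : ℝ :=
  (a q * a q + b q * b q - 2 * fderiv ℝ a q (1, 0) * b q * q.2) * (q.2 ^ 3)⁻¹

lemma integral_deriv_zero {f : ℝ → ℝ} (hf : ContDiff ℝ 1 f) (hc : HasCompactSupport f) :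
    ∫ x, deriv f x = 0 := by
  have hi : Integrable (deriv f) :=
    (hf.continuous_deriv le_rfl).integrable_of_hasCompactSupport hc.deriv
  have h1 := hc.integral_Iic_deriv_eq hf 0
  have h2 := hc.integral_Ioi_deriv_eq hf 0
  rw [← intervalIntegral.integral_Iic_add_Ioi hi.integrableOn hi.integrableOn, h1, h2]
  ring

lemma integral_pdX_zero {F : ℝ × ℝ → ℝ} (hF : ContDiff ℝ 1 F) (hc : HasCompactSupport F) :
    ∫ p : ℝ × ℝ, fderiv ℝ F p (1, 0) = 0 := by
  have hcont : Continuous fun p : ℝ × ℝ => fderiv ℝ F p (1, 0) :=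
    ((hF.fderiv_right (m := 0) le_rfl).clm_apply contDiff_const).continuous
  have hsupp : HasCompactSupport fun p : ℝ × ℝ => fderiv ℝ F p (1, 0) := by
    apply HasCompactSupport.intro hc
    intro p hp
    have h0 : fderiv ℝ F p = 0 := by
      by_contra h
      exact hp (support_fderiv_subset ℝ (Function.mem_support.mpr h))
    simp [h0]
  have hint : Integrable fun p : ℝ × ℝ => fderiv ℝ F p (1, 0) :=
    hcont.integrable_of_hasCompactSupport hsupp
  rw [MeasureTheory.Measure.volume_eq_prod] at hint ⊢
  rw [MeasureTheory.integral_prod_symm _ hint]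
  have hinner : ∀ y : ℝ, ∫ x : ℝ, fderiv ℝ F (x, y) (1, 0) = 0 := by
    intro y
    have hline : ContDiff ℝ 1 fun t : ℝ => F (t, y) :=
      hF.comp (contDiff_id.prodMk contDiff_const)
    have hlc : HasCompactSupport fun t : ℝ => F (t, y) := by
      apply HasCompactSupport.intro (hc.image continuous_fst)
      intro t ht
      by_contra h
      exact ht ⟨(t, y), subset_closure (Function.mem_support.mpr h), rfl⟩
    have hder : ∀ t : ℝ, deriv (fun t => F (t, y)) t = fderiv ℝ F (t, y) (1, 0) := by
      intro t
      have hl : HasDerivAt (fun t : ℝ => ((t : ℝ), y)) ((1 : ℝ), (0 : ℝ)) t :=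
        (hasDerivAt_id t).prodMk (hasDerivAt_const t y)
      have h1 : HasDerivAt (fun t : ℝ => F (t, y)) (fderiv ℝ F (t, y) (1, 0)) t :=
        ((hF.differentiable one_ne_zero) (t, y)).hasFDerivAt.comp_hasDerivAt t hl
      exact h1.deriv
    calc ∫ x : ℝ, fderiv ℝ F (x, y) (1, 0) = ∫ x : ℝ, deriv (fun t => F (t, y)) x := by
          simp_rw [hder]
      _ = 0 := integral_deriv_zero hline hlc
  simp [hinner]

lemma integral_pdY_zero {F : ℝ × ℝ → ℝ} (hF : ContDiff ℝ 1 F) (hc : HasCompactSupport F) :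
    ∫ p : ℝ × ℝ, fderiv ℝ F p (0, 1) = 0 := by
  have hcont : Continuous fun p : ℝ × ℝ => fderiv ℝ F p (0, 1) :=
    ((hF.fderiv_right (m := 0) le_rfl).clm_apply contDiff_const).continuous
  have hsupp : HasCompactSupport fun p : ℝ × ℝ => fderiv ℝ F p (0, 1) := by
    apply HasCompactSupport.intro hc
    intro p hp
    have h0 : fderiv ℝ F p = 0 := by
      by_contra h
      exact hp (support_fderiv_subset ℝ (Function.mem_support.mpr h))
    simp [h0]
  have hint : Integrable fun p : ℝ × ℝ => fderiv ℝ F p (0, 1) :=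
    hcont.integrable_of_hasCompactSupport hsupp
  rw [MeasureTheory.Measure.volume_eq_prod] at hint ⊢
  rw [MeasureTheory.integral_prod _ hint]
  have hinner : ∀ x : ℝ, ∫ y : ℝ, fderiv ℝ F (x, y) (0, 1) = 0 := by
    intro x
    have hline : ContDiff ℝ 1 fun t : ℝ => F (x, t) :=
      hF.comp (contDiff_const.prodMk contDiff_id)
    have hlc : HasCompactSupport fun t : ℝ => F (x, t) := by
      apply HasCompactSupport.intro (hc.image continuous_snd)
      intro t ht
      by_contra h
      exact ht ⟨(x, t), subset_closure (Function.mem_support.mpr h), rfl⟩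
    have hder : ∀ t : ℝ, deriv (fun t => F (x, t)) t = fderiv ℝ F (x, t) (0, 1) := by
      intro t
      have hl : HasDerivAt (fun t : ℝ => (x, (t : ℝ))) ((0 : ℝ), (1 : ℝ)) t :=
        (hasDerivAt_const t x).prodMk (hasDerivAt_id t)
      have h1 : HasDerivAt (fun t : ℝ => F (x, t)) (fderiv ℝ F (x, t) (0, 1)) t :=
        ((hF.differentiable one_ne_zero) (x, t)).hasFDerivAt.comp_hasDerivAt t hl
      exact h1.deriv
    calc ∫ y : ℝ, fderiv ℝ F (x, y) (0, 1) = ∫ y : ℝ, deriv (fun t => F (x, t)) y := by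
          simp_rw [hder]
      _ = 0 := integral_deriv_zero hline hlc
  simp [hinner]

lemma hasFDerivAt_inv_cube (p : ℝ × ℝ) (hy : p.2 ≠ 0) :
    HasFDerivAt (fun q : ℝ × ℝ => (q.2 ^ 3)⁻¹)
      ((-(3 * p.2 ^ 2) / (p.2 ^ 3) ^ 2) • ContinuousLinearMap.snd ℝ ℝ ℝ) p := by
  have h1 : HasDerivAt (fun t : ℝ => (t ^ 3)⁻¹) (-(3 * p.2 ^ 2) / (p.2 ^ 3) ^ 2) p.2 := by
    have h := (hasDerivAt_pow 3 p.2).inv (pow_ne_zero 3 hy)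
    exact h.congr_deriv (by norm_num)
  exact h1.comp_hasFDerivAt p hasFDerivAt_snd

lemma auxF_fderivX (a b : ℝ × ℝ → ℝ) (ha : ContDiff ℝ (⊤ : ℕ∞) a) (hb : ContDiff ℝ (⊤ : ℕ∞) b)
    (p : ℝ × ℝ) (hy : p.2 ≠ 0) :
    fderiv ℝ (auxF a b) p (1, 0) =
      ((2 * fderiv ℝ (fderiv ℝ a) p (1, 0) (0, 1) * p.2 - 2 * fderiv ℝ a p (1, 0)) * b p
        + (2 * fderiv ℝ a p (0, 1) * p.2 - 2 * a p) * fderiv ℝ b p (1, 0)) / p.2 ^ 3 := by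
  have haD := ha.differentiable (by simp)
  have hbD := hb.differentiable (by simp)
  have hfa : ContDiff ℝ (⊤ : ℕ∞) (fderiv ℝ a) := ha.fderiv_right (by simp)
  have hd2a : HasFDerivAt (fderiv ℝ a) (fderiv ℝ (fderiv ℝ a) p) p :=
    ((hfa.differentiable (by simp)) p).hasFDerivAt
  have hFp := ((((hd2a.clm_apply (hasFDerivAt_const ((0:ℝ),(1:ℝ)) p)).const_mul
      (2:ℝ)).mul hasFDerivAt_snd |>.sub (((haD p).hasFDerivAt).const_mul (2:ℝ))).mul
      ((hbD p).hasFDerivAt)).mul (hasFDerivAt_inv_cube p hy)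
  rw [show auxF a b = fun q =>
    (2 * fderiv ℝ a q (0, 1) * q.2 - 2 * a q) * b q * (q.2 ^ 3)⁻¹ from rfl]
  rw [HasFDerivAt.fderiv (f := fun q : ℝ × ℝ =>
    (2 * fderiv ℝ a q (0, 1) * q.2 - 2 * a q) * b q * (q.2 ^ 3)⁻¹) hFp]
  simp [ContinuousLinearMap.add_apply, ContinuousLinearMap.smul_apply,
    ContinuousLinearMap.comp_apply, ContinuousLinearMap.flip_apply,
    ContinuousLinearMap.coe_snd', smul_eq_mul]
  field_simp
  ring

lemma auxG_fderivY (a b : ℝ × ℝ → ℝ) (ha : ContDiff ℝ (⊤ : ℕ∞) a) (hb : ContDiff ℝ (⊤ : ℕ∞) b)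
    (p : ℝ × ℝ) (hy : p.2 ≠ 0) :
    fderiv ℝ (auxG a b) p (0, 1) =
      (2 * a p * fderiv ℝ a p (0, 1) + 2 * b p * fderiv ℝ b p (0, 1)
        - 2 * (fderiv ℝ (fderiv ℝ a) p (0, 1) (1, 0) * b p * p.2
            + fderiv ℝ a p (1, 0) * fderiv ℝ b p (0, 1) * p.2
            + fderiv ℝ a p (1, 0) * b p)) / p.2 ^ 3
      - 3 * (a p * a p + b p * b p - 2 * fderiv ℝ a p (1, 0) * b p * p.2) / p.2 ^ 4 := by
  have haD := ha.differentiable (by simp)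
  have hbD := hb.differentiable (by simp)
  have hfa : ContDiff ℝ (⊤ : ℕ∞) (fderiv ℝ a) := ha.fderiv_right (by simp)
  have hd2a : HasFDerivAt (fderiv ℝ a) (fderiv ℝ (fderiv ℝ a) p) p :=
    ((hfa.differentiable (by simp)) p).hasFDerivAt
  have hGp := (((((haD p).hasFDerivAt.mul (haD p).hasFDerivAt).add
      ((hbD p).hasFDerivAt.mul (hbD p).hasFDerivAt)).sub
      ((((hd2a.clm_apply (hasFDerivAt_const ((1:ℝ),(0:ℝ)) p)).const_mul (2:ℝ)).mul
        ((hbD p).hasFDerivAt)).mul hasFDerivAt_snd)).mul (hasFDerivAt_inv_cube p hy))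
  rw [show auxG a b = fun q =>
    (a q * a q + b q * b q - 2 * fderiv ℝ a q (1, 0) * b q * q.2) * (q.2 ^ 3)⁻¹ from rfl]
  rw [HasFDerivAt.fderiv (f := fun q : ℝ × ℝ =>
    (a q * a q + b q * b q - 2 * fderiv ℝ a q (1, 0) * b q * q.2) * (q.2 ^ 3)⁻¹) hGp]
  simp [ContinuousLinearMap.add_apply, ContinuousLinearMap.smul_apply,
    ContinuousLinearMap.comp_apply, ContinuousLinearMap.flip_apply,
    ContinuousLinearMap.coe_snd', smul_eq_mul]
  field_simp
  ring

/-- Poincaré-type inequality on `ℍ²`: for divergence-free compactly supported fields,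
`‖u‖²_{L²(ℍ²)} ≤ ‖∇u‖²_{L²(ℍ²)}`, a consequence of the nonnegativity of the Hodge
dissipation form `‖du♭‖²`. -/
theorem poincare_type_inequality_on_H2
    (a b : ℝ × ℝ → ℝ)
    (ha : ContDiff ℝ (⊤ : ℕ∞) a) (hb : ContDiff ℝ (⊤ : ℕ∞) b)
    (hca : HasCompactSupport a) (hcb : HasCompactSupport b)
    (hsa : tsupport a ⊆ upperHalf) (hsb : tsupport b ⊆ upperHalf)
    (hdiv : ∀ p ∈ upperHalf, pdX a p + pdY b p - 2 * b p / p.2 = 0) :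
    ∫ p in upperHalf, (a p ^ 2 + b p ^ 2) / p.2 ^ 4
      ≤ ∫ p in upperHalf,
          ((pdX a p - b p / p.2) ^ 2 + (pdY a p - a p / p.2) ^ 2
            + (pdX b p + a p / p.2) ^ 2 + (pdY b p - b p / p.2) ^ 2) / p.2 ^ 2 := by
  have haD := ha.differentiable (by simp)
  have hbD := hb.differentiable (by simp)
  have hfa : ContDiff ℝ (⊤ : ℕ∞) (fderiv ℝ a) := ha.fderiv_right (by simp)
  have hfb : ContDiff ℝ (⊤ : ℕ∞) (fderiv ℝ b) := hb.fderiv_right (by simp)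
  set K : Set (ℝ × ℝ) := tsupport a ∪ tsupport b with hKdef
  have hKc : IsCompact K := hca.union hcb
  have hKU : K ⊆ upperHalf := Set.union_subset hsa hsb
  have hKcl : IsClosed K := (isClosed_tsupport a).union (isClosed_tsupport b)
  have ha0 : ∀ q : ℝ × ℝ, q ∉ K → a q = 0 := fun q hq =>
    image_eq_zero_of_notMem_tsupport fun h => hq (Set.mem_union_left _ h)
  have hb0 : ∀ q : ℝ × ℝ, q ∉ K → b q = 0 := fun q hq =>
    image_eq_zero_of_notMem_tsupport fun h => hq (Set.mem_union_right _ h)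
  have hfa0 : ∀ q : ℝ × ℝ, q ∉ K → fderiv ℝ a q = 0 := by
    intro q hq
    have hev : a =ᶠ[nhds q] fun _ => (0 : ℝ) :=
      Filter.eventually_of_mem (hKcl.isOpen_compl.mem_nhds hq) fun r hr => ha0 r hr
    rw [hev.fderiv_eq]
    exact fderiv_const_apply 0
  have hfb0 : ∀ q : ℝ × ℝ, q ∉ K → fderiv ℝ b q = 0 := by
    intro q hq
    have hev : b =ᶠ[nhds q] fun _ => (0 : ℝ) :=
      Filter.eventually_of_mem (hKcl.isOpen_compl.mem_nhds hq) fun r hr => hb0 r hr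
    rw [hev.fderiv_eq]
    exact fderiv_const_apply 0
  have hnotK : ∀ p : ℝ × ℝ, p ∉ upperHalf → p ∉ K := fun p hp hk => hp (hKU hk)
  have hy0K : ∀ p : ℝ × ℝ, p.2 = 0 → p ∉ K := by
    intro p hp hk
    have h : (0 : ℝ) < p.2 := hKU hk
    rw [hp] at h
    exact lt_irrefl 0 h
  -- vanishing of auxF, auxG off K
  have hFz : ∀ q : ℝ × ℝ, q ∉ K → auxF a b q = 0 := fun q hq => by
    simp [auxF, hb0 q hq]
  have hGz : ∀ q : ℝ × ℝ, q ∉ K → auxG a b q = 0 := fun q hq => by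
    simp [auxG, ha0 q hq, hb0 q hq]
  have hF0 : ∀ q : ℝ × ℝ, q ∉ K → fderiv ℝ (auxF a b) q = 0 := by
    intro q hq
    have hev : auxF a b =ᶠ[nhds q] fun _ => (0 : ℝ) :=
      Filter.eventually_of_mem (hKcl.isOpen_compl.mem_nhds hq) fun r hr => hFz r hr
    rw [hev.fderiv_eq]
    exact fderiv_const_apply 0
  have hG0 : ∀ q : ℝ × ℝ, q ∉ K → fderiv ℝ (auxG a b) q = 0 := by
    intro q hq
    have hev : auxG a b =ᶠ[nhds q] fun _ => (0 : ℝ) :=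
      Filter.eventually_of_mem (hKcl.isOpen_compl.mem_nhds hq) fun r hr => hGz r hr
    rw [hev.fderiv_eq]
    exact fderiv_const_apply 0
  -- smoothness of auxF, auxG
  have hFsm : ContDiff ℝ 1 (auxF a b) := by
    rw [contDiff_iff_contDiffAt]
    intro p
    by_cases hp : p.2 = 0
    · have hpK : p ∉ K := hy0K p hp
      have hev : auxF a b =ᶠ[nhds p] fun _ => (0 : ℝ) :=
        Filter.eventually_of_mem (hKcl.isOpen_compl.mem_nhds hpK) fun r hr => hFz r hr
      exact (contDiffAt_const (c := (0 : ℝ))).congr_of_eventuallyEq hev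
    · have hnum : ContDiff ℝ (⊤ : ℕ∞) fun q : ℝ × ℝ =>
          (2 * fderiv ℝ a q (0, 1) * q.2 - 2 * a q) * b q :=
        (((contDiff_const.mul (hfa.clm_apply contDiff_const)).mul contDiff_snd).sub
          (contDiff_const.mul ha)).mul hb
      have hden : ContDiffAt ℝ (⊤ : ℕ∞) (fun q : ℝ × ℝ => (q.2 ^ 3)⁻¹) p :=
        ((contDiff_snd.pow 3).contDiffAt).inv (pow_ne_zero 3 hp)
      exact (hnum.contDiffAt.mul hden).of_le (by simp)
  have hGsm : ContDiff ℝ 1 (auxG a b) := by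
    rw [contDiff_iff_contDiffAt]
    intro p
    by_cases hp : p.2 = 0
    · have hpK : p ∉ K := hy0K p hp
      have hev : auxG a b =ᶠ[nhds p] fun _ => (0 : ℝ) :=
        Filter.eventually_of_mem (hKcl.isOpen_compl.mem_nhds hpK) fun r hr => hGz r hr
      exact (contDiffAt_const (c := (0 : ℝ))).congr_of_eventuallyEq hev
    · have hnum : ContDiff ℝ (⊤ : ℕ∞) fun q : ℝ × ℝ =>
          a q * a q + b q * b q - 2 * fderiv ℝ a q (1, 0) * b q * q.2 :=
        ((ha.mul ha).add (hb.mul hb)).sub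
          (((contDiff_const.mul (hfa.clm_apply contDiff_const)).mul hb).mul contDiff_snd)
      have hden : ContDiffAt ℝ (⊤ : ℕ∞) (fun q : ℝ × ℝ => (q.2 ^ 3)⁻¹) p :=
        ((contDiff_snd.pow 3).contDiffAt).inv (pow_ne_zero 3 hp)
      exact (hnum.contDiffAt.mul hden).of_le (by simp)
  have hFcs : HasCompactSupport (auxF a b) := HasCompactSupport.intro hKc hFz
  have hGcs : HasCompactSupport (auxG a b) := HasCompactSupport.intro hKc hGz
  -- continuity helper
  have contAux : ∀ f : ℝ × ℝ → ℝ, (∀ p : ℝ × ℝ, p.2 ≠ 0 → ContinuousAt f p) →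
      (∀ p : ℝ × ℝ, p ∉ K → f p = 0) → Continuous f := by
    intro f h1 h2
    rw [continuous_iff_continuousAt]
    intro p
    by_cases hp : p.2 = 0
    · have hpK : p ∉ K := hy0K p hp
      exact continuousAt_const.congr
        (Filter.eventually_of_mem (hKcl.isOpen_compl.mem_nhds hpK)
          fun q hq => (h2 q hq).symm)
    · exact h1 p hp
  -- the three integrands
  have haxC : Continuous fun p : ℝ × ℝ => fderiv ℝ a p (1, 0) :=
    (hfa.clm_apply contDiff_const).continuous
  have hayC : Continuous fun p : ℝ × ℝ => fderiv ℝ a p (0, 1) :=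
    (hfa.clm_apply contDiff_const).continuous
  have hbxC : Continuous fun p : ℝ × ℝ => fderiv ℝ b p (1, 0) :=
    (hfb.clm_apply contDiff_const).continuous
  have hbyC : Continuous fun p : ℝ × ℝ => fderiv ℝ b p (0, 1) :=
    (hfb.clm_apply contDiff_const).continuous
  have hI1C : Continuous fun p : ℝ × ℝ => (a p ^ 2 + b p ^ 2) / p.2 ^ 4 := by
    apply contAux
    · intro p hp
      exact ContinuousAt.div (((ha.continuous.pow 2).add (hb.continuous.pow 2)).continuousAt)
        ((continuous_snd.pow 4).continuousAt) (pow_ne_zero 4 hp)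
    · intro p hp
      simp [ha0 p hp, hb0 p hp]
  have hI2C : Continuous fun p : ℝ × ℝ =>
      ((pdX a p - b p / p.2) ^ 2 + (pdY a p - a p / p.2) ^ 2
        + (pdX b p + a p / p.2) ^ 2 + (pdY b p - b p / p.2) ^ 2) / p.2 ^ 2 := by
    apply contAux
    · intro p hp
      have hsnd : ContinuousAt (fun p : ℝ × ℝ => p.2) p := continuous_snd.continuousAt
      simp only [pdX, pdY]
      exact ContinuousAt.div
        ((((haxC.continuousAt.sub (hb.continuous.continuousAt.div hsnd hp)).pow 2).add
          ((hayC.continuousAt.sub (ha.continuous.continuousAt.div hsnd hp)).pow 2) |>.add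
          ((hbxC.continuousAt.add (ha.continuous.continuousAt.div hsnd hp)).pow 2) |>.add
          ((hbyC.continuousAt.sub (hb.continuous.continuousAt.div hsnd hp)).pow 2)))
        ((continuous_snd.pow 2).continuousAt) (pow_ne_zero 2 hp)
    · intro p hp
      simp [pdX, pdY, ha0 p hp, hb0 p hp, hfa0 p hp, hfb0 p hp]
  have hR2C : Continuous fun p : ℝ × ℝ =>
      (pdX b p - pdY a p + 2 * (a p / p.2)) ^ 2 / p.2 ^ 2 := by
    apply contAux
    · intro p hp
      have hsnd : ContinuousAt (fun p : ℝ × ℝ => p.2) p := continuous_snd.continuousAt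
      simp only [pdX, pdY]
      exact ContinuousAt.div
        (((hbxC.continuousAt.sub hayC.continuousAt).add
          (continuousAt_const.mul (ha.continuous.continuousAt.div hsnd hp))).pow 2)
        ((continuous_snd.pow 2).continuousAt) (pow_ne_zero 2 hp)
    · intro p hp
      simp [pdX, pdY, ha0 p hp, hfa0 p hp, hfb0 p hp]
  -- compact supports and integrability
  have hI1cs : HasCompactSupport fun p : ℝ × ℝ => (a p ^ 2 + b p ^ 2) / p.2 ^ 4 :=
    HasCompactSupport.intro hKc fun q hq => by simp [ha0 q hq, hb0 q hq]
  have hI2cs : HasCompactSupport fun p : ℝ × ℝ =>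
      ((pdX a p - b p / p.2) ^ 2 + (pdY a p - a p / p.2) ^ 2
        + (pdX b p + a p / p.2) ^ 2 + (pdY b p - b p / p.2) ^ 2) / p.2 ^ 2 :=
    HasCompactSupport.intro hKc fun q hq => by
      simp [pdX, pdY, ha0 q hq, hb0 q hq, hfa0 q hq, hfb0 q hq]
  have hR2cs : HasCompactSupport fun p : ℝ × ℝ =>
      (pdX b p - pdY a p + 2 * (a p / p.2)) ^ 2 / p.2 ^ 2 :=
    HasCompactSupport.intro hKc fun q hq => by
      simp [pdX, pdY, ha0 q hq, hfa0 q hq, hfb0 q hq]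
  have hI1i : Integrable fun p : ℝ × ℝ => (a p ^ 2 + b p ^ 2) / p.2 ^ 4 :=
    hI1C.integrable_of_hasCompactSupport hI1cs
  have hI2i : Integrable fun p : ℝ × ℝ =>
      ((pdX a p - b p / p.2) ^ 2 + (pdY a p - a p / p.2) ^ 2
        + (pdX b p + a p / p.2) ^ 2 + (pdY b p - b p / p.2) ^ 2) / p.2 ^ 2 :=
    hI2C.integrable_of_hasCompactSupport hI2cs
  have hR2i : Integrable fun p : ℝ × ℝ =>
      (pdX b p - pdY a p + 2 * (a p / p.2)) ^ 2 / p.2 ^ 2 :=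
    hR2C.integrable_of_hasCompactSupport hR2cs
  have hHXi : Integrable fun p : ℝ × ℝ => fderiv ℝ (auxF a b) p (1, 0) := by
    apply Continuous.integrable_of_hasCompactSupport
    · exact ((hFsm.fderiv_right (m := 0) le_rfl).clm_apply contDiff_const).continuous
    · exact HasCompactSupport.intro hKc fun q hq => by simp [hF0 q hq]
  have hHYi : Integrable fun p : ℝ × ℝ => fderiv ℝ (auxG a b) p (0, 1) := by
    apply Continuous.integrable_of_hasCompactSupport
    · exact ((hGsm.fderiv_right (m := 0) le_rfl).clm_apply contDiff_const).continuous
    · exact HasCompactSupport.intro hKc fun q hq => by simp [hG0 q hq]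
  have hHi : Integrable fun p : ℝ × ℝ =>
      fderiv ℝ (auxF a b) p (1, 0) + fderiv ℝ (auxG a b) p (0, 1) := hHXi.add hHYi
  -- measurability of upperHalf
  have hUHo : IsOpen upperHalf := isOpen_lt continuous_const continuous_snd
  have hUHm : MeasurableSet upperHalf := hUHo.measurableSet
  -- key pointwise identity
  have key : ∀ p : ℝ × ℝ,
      ((pdX a p - b p / p.2) ^ 2 + (pdY a p - a p / p.2) ^ 2
        + (pdX b p + a p / p.2) ^ 2 + (pdY b p - b p / p.2) ^ 2) / p.2 ^ 2
      - (a p ^ 2 + b p ^ 2) / p.2 ^ 4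
      = (pdX b p - pdY a p + 2 * (a p / p.2)) ^ 2 / p.2 ^ 2
        + (fderiv ℝ (auxF a b) p (1, 0) + fderiv ℝ (auxG a b) p (0, 1)) := by
    intro p
    by_cases hp : p ∈ upperHalf
    · have hy : (0 : ℝ) < p.2 := hp
      have hyne : p.2 ≠ 0 := ne_of_gt hy
      have hFx := auxF_fderivX a b ha hb p hyne
      have hGy := auxG_fderivY a b ha hb p hyne
      have hsym : fderiv ℝ (fderiv ℝ a) p ((0 : ℝ), (1 : ℝ)) ((1 : ℝ), (0 : ℝ))
          = fderiv ℝ (fderiv ℝ a) p (1, 0) (0, 1) :=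
        second_derivative_symmetric (fun q => (haD q).hasFDerivAt)
          ((hfa.differentiable (by simp) p).hasFDerivAt) _ _
      have hBy : fderiv ℝ b p (0, 1) = 2 * b p / p.2 - fderiv ℝ a p (1, 0) := by
        have h := hdiv p hp
        simp only [pdX, pdY] at h
        linarith
      simp only [pdX, pdY]
      rw [hFx, hGy, hsym, hBy]
      field_simp
      ring
    · have hpK : p ∉ K := hnotK p hp
      simp [pdX, pdY, ha0 p hpK, hb0 p hpK, hfa0 p hpK, hfb0 p hpK,
        hF0 p hpK, hG0 p hpK]
  -- assemble the integrals
  have hsub : (∫ p in upperHalf,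
        ((pdX a p - b p / p.2) ^ 2 + (pdY a p - a p / p.2) ^ 2
          + (pdX b p + a p / p.2) ^ 2 + (pdY b p - b p / p.2) ^ 2) / p.2 ^ 2)
      - ∫ p in upperHalf, (a p ^ 2 + b p ^ 2) / p.2 ^ 4
      = ∫ p in upperHalf,
          (((pdX a p - b p / p.2) ^ 2 + (pdY a p - a p / p.2) ^ 2
            + (pdX b p + a p / p.2) ^ 2 + (pdY b p - b p / p.2) ^ 2) / p.2 ^ 2
          - (a p ^ 2 + b p ^ 2) / p.2 ^ 4) :=
    (integral_sub hI2i.integrableOn hI1i.integrableOn).symm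
  have hcongr : (∫ p in upperHalf,
        (((pdX a p - b p / p.2) ^ 2 + (pdY a p - a p / p.2) ^ 2
          + (pdX b p + a p / p.2) ^ 2 + (pdY b p - b p / p.2) ^ 2) / p.2 ^ 2
        - (a p ^ 2 + b p ^ 2) / p.2 ^ 4))
      = ∫ p in upperHalf,
          ((pdX b p - pdY a p + 2 * (a p / p.2)) ^ 2 / p.2 ^ 2
            + (fderiv ℝ (auxF a b) p (1, 0) + fderiv ℝ (auxG a b) p (0, 1))) :=
    integral_congr_ae (Filter.Eventually.of_forall fun p => key p)
  have hadd : (∫ p in upperHalf,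
        ((pdX b p - pdY a p + 2 * (a p / p.2)) ^ 2 / p.2 ^ 2
          + (fderiv ℝ (auxF a b) p (1, 0) + fderiv ℝ (auxG a b) p (0, 1))))
      = (∫ p in upperHalf, (pdX b p - pdY a p + 2 * (a p / p.2)) ^ 2 / p.2 ^ 2)
        + ∫ p in upperHalf,
            (fderiv ℝ (auxF a b) p (1, 0) + fderiv ℝ (auxG a b) p (0, 1)) :=
    integral_add hR2i.integrableOn hHi.integrableOn
  have hHext : (∫ p in upperHalf,
        (fderiv ℝ (auxF a b) p (1, 0) + fderiv ℝ (auxG a b) p (0, 1)))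
      = ∫ p : ℝ × ℝ, (fderiv ℝ (auxF a b) p (1, 0) + fderiv ℝ (auxG a b) p (0, 1)) := by
    apply setIntegral_eq_integral_of_forall_compl_eq_zero
    intro p hp
    have hpK : p ∉ K := hnotK p hp
    simp [hF0 p hpK, hG0 p hpK]
  have hHzero : (∫ p : ℝ × ℝ,
      (fderiv ℝ (auxF a b) p (1, 0) + fderiv ℝ (auxG a b) p (0, 1))) = 0 := by
    rw [integral_add hHXi hHYi, integral_pdX_zero hFsm hFcs, integral_pdY_zero hGsm hGcs]
    ring
  have hR2nn : (0 : ℝ) ≤ ∫ p in upperHalf,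
      (pdX b p - pdY a p + 2 * (a p / p.2)) ^ 2 / p.2 ^ 2 :=
    setIntegral_nonneg hUHm fun p _ => by positivity
  linarith [hsub, hcongr, hadd, hHext, hHzero, hR2nn]
end

section
/- Let d ≥ 2 and let L be a real-linear map on d×d real matrices which preserves symmetric matrices and is isotropic, i.e. L(Q S Qᵀ) = Q·(L S)·Qᵀ for every orthogonal matrix Q and every symmetric matrix S. Then there exist real constants μ and λ (shear and bulk moduli) such that L(S) = 2μ·S + λ·(trace S)·I for every symmetric d×d matrix S. (An isotropic simple fluid therefore admits at most two independent viscosity coefficients, corresponding to the trace and trace-free parts of the rate-of-strain tensor.) -/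
/-!
Conjugation by the reflection `diag(1, …, -1, …, 1)` fixes every diagonal matrix but flips the
sign of the off-diagonal entries in one row and column, so isotropy forces `L` to map diagonal
matrices to diagonal matrices. Conjugation by permutation matrices then makes
`v ↦ diag (L (diagonal v))` a permutation-equivariant linear map of `ℝⁿ`, and such a map is
`v ↦ a v + b (∑ᵢ vᵢ) 𝟙`.
A symmetric `S` is `U diag(v) Uᵀ` with `U` orthogonal, and isotropy carries the formula from
`diag(v)` to `S`, since `trace S = ∑ᵢ vᵢ`.
-/

open Matrix

namespace Matrix

variable {n R : Type*} [Fintype n] [DecidableEq n]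

theorem transpose_permMatrix_mul_self [NonAssocSemiring R] (σ : Equiv.Perm n) :
    (σ.permMatrix R)ᵀ * σ.permMatrix R = 1 := by
  rw [transpose_permMatrix, ← permMatrix_mul, mul_inv_cancel, permMatrix_one]

theorem permMatrix_mul_mul_transpose [NonAssocSemiring R] (σ : Equiv.Perm n) (M : Matrix n n R) :
    σ.permMatrix R * M * (σ.permMatrix R)ᵀ = M.submatrix σ σ := by
  rw [transpose_permMatrix, PEquiv.toMatrix_toPEquiv_mul, PEquiv.mul_toMatrix_toPEquiv,
    Equiv.Perm.inv_def, Equiv.symm_symm]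
  rfl

theorem exists_orthogonal_diagonal_conj_of_transpose_eq {S : Matrix n n ℝ} (hS : Sᵀ = S) :
    ∃ (U : Matrix n n ℝ) (v : n → ℝ),
      Uᵀ * U = 1 ∧ U * Uᵀ = 1 ∧ S = U * diagonal v * Uᵀ := by
  have hS' : S.IsHermitian := by
    rw [IsHermitian, conjTranspose_eq_transpose_of_trivial, hS]
  refine ⟨hS'.eigenvectorUnitary, hS'.eigenvalues, ?_, ?_, ?_⟩
  · exact (mem_unitaryGroup_iff').mp hS'.eigenvectorUnitary.2
  · exact (mem_unitaryGroup_iff).mp hS'.eigenvectorUnitary.2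
  · conv_lhs => rw [hS'.spectral_theorem]
    rfl

end Matrix

namespace LinearMap

variable {R n : Type*} [CommRing R] [DecidableEq n]
  {g : (n → R) →ₗ[R] n → R}

theorem apply_single_perm (hg : ∀ (σ : Equiv.Perm n) v, g (v ∘ σ) = g v ∘ σ)
    (σ : Equiv.Perm n) (i j : n) :
    g (Pi.single (σ i) 1) (σ j) = g (Pi.single i 1) j := by
  have := congrFun (hg σ (Pi.single (σ i) 1)) j
  rw [Pi.single_comp_equiv, Equiv.symm_apply_apply] at this
  exact this.symm

theorem apply_single_eq_of_ne (hg : ∀ (σ : Equiv.Perm n) v, g (v ∘ σ) = g v ∘ σ)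
    {i₀ i₁ i j : n} (h₀₁ : i₀ ≠ i₁) (hij : i ≠ j) :
    g (Pi.single i 1) j = g (Pi.single i₀ 1) i₁ := by
  set k := Equiv.swap i i₀ j
  have hk : k ≠ i₀ := by
    simpa [k, Equiv.swap_apply_eq_iff] using hij.symm
  calc g (Pi.single i 1) j = g (Pi.single i₀ 1) k := by
        rw [← apply_single_perm hg (Equiv.swap i i₀), Equiv.swap_apply_left]
    _ = g (Pi.single i₀ 1) i₁ := by
        rw [← apply_single_perm hg (Equiv.swap k i₁), Equiv.swap_apply_left,
          Equiv.swap_apply_of_ne_of_ne hk.symm h₀₁]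

theorem exists_apply_eq_smul_add_sum_of_comp_perm [Fintype n] [Nontrivial n]
    (hg : ∀ (σ : Equiv.Perm n) v, g (v ∘ σ) = g v ∘ σ) :
    ∃ a b : R, ∀ v, g v = a • v + (b * ∑ i, v i) • 1 := by
  obtain ⟨i₀, i₁, h₀₁⟩ := exists_pair_ne n
  set a := g (Pi.single i₀ 1) i₀
  set b := g (Pi.single i₀ 1) i₁
  have hsingle : ∀ i, g (Pi.single i 1) = (a - b) • Pi.single i 1 + b • 1 := by
    intro i
    ext j
    rcases eq_or_ne j i with rfl | hij
    · simp [a, ← apply_single_perm hg (Equiv.swap i₀ j) i₀ i₀]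
    · simp [hij, apply_single_eq_of_ne hg h₀₁ hij.symm, b]
  refine ⟨a - b, b, fun v => ?_⟩
  have hv : v = ∑ i, v i • Pi.single i 1 := by simp [← Pi.single_smul, Finset.univ_sum_single]
  conv_lhs => rw [hv]
  simp only [map_sum, map_smul, hsingle, smul_add, Finset.sum_add_distrib, smul_smul,
    ← Finset.sum_smul]
  ext j
  simp [Finset.sum_apply, Pi.single_apply, Finset.mul_sum, Finset.sum_mul, mul_comm]

end LinearMap

section Isotropic

variable {n : Type*} [Fintype n] [DecidableEq n]

def IsIsotropic (L : Matrix n n ℝ →ₗ[ℝ] Matrix n n ℝ) : Prop :=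
  ∀ Q S : Matrix n n ℝ, Qᵀ * Q = 1 → Sᵀ = S → L (Q * S * Qᵀ) = Q * L S * Qᵀ

namespace IsIsotropic

variable {L : Matrix n n ℝ →ₗ[ℝ] Matrix n n ℝ}

theorem isDiag_apply_diagonal (hL : IsIsotropic L) (v : n → ℝ) : (L (diagonal v)).IsDiag := by
  intro i j hij
  set ε : n → ℝ := fun m => if m = i then -1 else 1
  have hε : ∀ m, ε m * ε m = 1 := fun m => by by_cases h : m = i <;> simp [ε, h]
  have hconj := hL (diagonal ε) (diagonal v)
    (by rw [diagonal_transpose, diagonal_mul_diagonal, funext hε, diagonal_one])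
    (diagonal_transpose v)
  rw [diagonal_transpose, diagonal_mul_diagonal, diagonal_mul_diagonal] at hconj
  simp only [mul_right_comm _ (v _), hε, one_mul] at hconj
  have hentry := congrFun (congrFun hconj i) j
  rw [mul_diagonal, diagonal_mul] at hentry
  simp [ε, hij.symm] at hentry
  linarith

theorem apply_diagonal_comp (hL : IsIsotropic L) (σ : Equiv.Perm n) (v : n → ℝ) :
    L (diagonal (v ∘ σ)) = (L (diagonal v)).submatrix σ σ := by
  have := hL (σ.permMatrix ℝ) (diagonal v) (transpose_permMatrix_mul_self σ)
    (diagonal_transpose v)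
  rwa [permMatrix_mul_mul_transpose, permMatrix_mul_mul_transpose,
    submatrix_diagonal_equiv] at this

theorem exists_apply_diagonal [Nontrivial n] (hL : IsIsotropic L) :
    ∃ a b : ℝ, ∀ v, L (diagonal v) = a • diagonal v + (b * ∑ i, v i) • 1 := by
  let g := diagLinearMap n ℝ ℝ ∘ₗ L ∘ₗ diagonalLinearMap n ℝ ℝ
  have hg : ∀ (σ : Equiv.Perm n) v, g (v ∘ σ) = g v ∘ σ := fun σ v => by
    show (L (diagonal (v ∘ σ))).diag = (L (diagonal v)).diag ∘ σ
    rw [hL.apply_diagonal_comp, diag_submatrix]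
  obtain ⟨a, b, hab⟩ := LinearMap.exists_apply_eq_smul_add_sum_of_comp_perm hg
  refine ⟨a, b, fun v => ?_⟩
  rw [← (hL.isDiag_apply_diagonal v).diagonal_diag]
  change diagonal (g v) = _
  rw [hab v, ← diagonal_one, ← diagonal_smul, ← diagonal_smul, diagonal_add]
  rfl

theorem exists_apply_eq_of_transpose_eq [Nontrivial n] (hL : IsIsotropic L) :
    ∃ a b : ℝ, ∀ S : Matrix n n ℝ, Sᵀ = S → L S = a • S + (b * trace S) • 1 := by
  obtain ⟨a, b, hab⟩ := hL.exists_apply_diagonal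
  refine ⟨a, b, fun S hS => ?_⟩
  obtain ⟨U, v, hUU, hUU', rfl⟩ := exists_orthogonal_diagonal_conj_of_transpose_eq hS
  have htrace : trace (U * diagonal v * Uᵀ) = ∑ i, v i := by
    rw [trace_mul_cycle, hUU, one_mul, trace_diagonal]
  rw [hL U _ hUU (diagonal_transpose v), hab, htrace, Matrix.mul_add, Matrix.add_mul,
    Matrix.mul_smul, Matrix.smul_mul, Matrix.mul_smul, Matrix.smul_mul, mul_one, hUU']

end IsIsotropic

end Isotropic

theorem isotropic_constitutive_law_two_moduli_general {d : ℕ} (hd : 2 ≤ d)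
    (L : Matrix (Fin d) (Fin d) ℝ →ₗ[ℝ] Matrix (Fin d) (Fin d) ℝ)
    (hiso : ∀ Q S : Matrix (Fin d) (Fin d) ℝ, Qᵀ * Q = 1 → Sᵀ = S →
      L (Q * S * Qᵀ) = Q * L S * Qᵀ) :
    ∃ μ lam : ℝ, ∀ S : Matrix (Fin d) (Fin d) ℝ, Sᵀ = S →
      L S = (2 * μ) • S + (lam * Matrix.trace S) • (1 : Matrix (Fin d) (Fin d) ℝ) := by
  have : Nontrivial (Fin d) := Fin.nontrivial_iff_two_le.mpr hd
  obtain ⟨a, b, hab⟩ := IsIsotropic.exists_apply_eq_of_transpose_eq hiso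
  exact ⟨a / 2, b, fun S hS => by rw [mul_div_cancel₀ a two_ne_zero, hab S hS]⟩

/-- An isotropic linear constitutive law on `d×d` matrices (`d ≥ 2`) that preserves
symmetric matrices and is equivariant under conjugation by the orthogonal group is of the
form `S ↦ 2μ S + λ (tr S) I` on symmetric matrices: an isotropic simple fluid admits at
most two independent viscosity coefficients. -/
theorem isotropic_constitutive_law_two_moduli {d : ℕ} (hd : 2 ≤ d)
    (L : Matrix (Fin d) (Fin d) ℝ →ₗ[ℝ] Matrix (Fin d) (Fin d) ℝ)
    (hsym : ∀ S : Matrix (Fin d) (Fin d) ℝ, Sᵀ = S → (L S)ᵀ = L S)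
    (hiso : ∀ Q S : Matrix (Fin d) (Fin d) ℝ, Qᵀ * Q = 1 → Sᵀ = S →
      L (Q * S * Qᵀ) = Q * L S * Qᵀ) :
    ∃ μ lam : ℝ, ∀ S : Matrix (Fin d) (Fin d) ℝ, Sᵀ = S →
      L S = (2 * μ) • S + (lam * Matrix.trace S) • (1 : Matrix (Fin d) (Fin d) ℝ) :=
  isotropic_constitutive_law_two_moduli_general hd L hiso
end

section
/- Let u : ℝ × ℝᵈ → ℝᵈ be continuously differentiable and divergence-free in the space variable, i.e. Σₐ ∂ₐuₐ(t,x) = 0 for all (t,x), and let φ : ℝ × ℝᵈ → ℝᵈ be twice continuously differentiable with φ(0,x) = x and ∂ₜφ(t,x) = u(t, φ(t,x)) for all (t,x). Then the flow is volume preserving: det((Dₓφ)(t,x₀)) = 1 for all t ∈ ℝ and x₀ ∈ ℝᵈ, where Dₓφ denotes the spatial Jacobian of φ(t,·). (This is the Lagrangian statement that an incompressible flow transports volume elements without change, the basis of mass conservation ρ dᵈx = const along particle paths.) -/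
/-!
Fix `x₀` and let `M t = D_x φ (t, x₀)`. Differentiating `∂ₜφ = u (t, φ)` in `x` and commuting
the mixed partials of the `C²` map `φ` gives the variational equation
`M' = D_x u (t, φ (t, x₀)) ∘ M`. Liouville's formula then gives
`(det M)' = tr (D_x u) · det M = (div u) · det M = 0`, so `det M t = det M 0 = det id = 1`.
Liouville's formula itself comes from the multilinearity of `det` in the rows together with
the expansion of a determinant along a row by the adjugate.
-/

open Matrix

namespace Matrix

variable {n R : Type*} [Fintype n] [DecidableEq n]

theorem sum_det_updateRow_mulVec [CommRing R] (A C : Matrix n n R) :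
    ∑ i, (A.updateRow i (C *ᵥ A i)).det = C.trace * A.det := by
  have hrow : ∀ i (w : n → R), (A.updateRow i w).det = ∑ k, A.adjugate k i * w k := by
    intro i w
    rw [← cramer_transpose_apply, cramer_eq_adjugate_mulVec, ← adjugate_transpose]
    simp [mulVec, dotProduct, mul_comm]
  calc ∑ i, (A.updateRow i (C *ᵥ A i)).det
      = ∑ k, ∑ l, C k l * (A.adjugate * A) k l := by
        simp only [hrow, mulVec, dotProduct, mul_apply, Finset.mul_sum]
        rw [Finset.sum_comm]
        refine Finset.sum_congr rfl fun k _ => ?_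
        rw [Finset.sum_comm]
        exact Finset.sum_congr rfl fun l _ => Finset.sum_congr rfl fun i _ => by ring
    _ = C.trace * A.det := by
        simp [adjugate_mul, trace, diag, one_apply, Finset.sum_mul]

variable {𝕜 : Type*} [NontriviallyNormedField 𝕜]

def detRowContinuousMultilinear : ContinuousMultilinearMap 𝕜 (fun _ : n => n → 𝕜) 𝕜 where
  toMultilinearMap := (detRowAlternating : (n → 𝕜) [⋀^n]→ₗ[𝕜] 𝕜).toMultilinearMap
  cont := continuous_id.matrix_det

theorem detRowContinuousMultilinear_apply (v : n → n → 𝕜) :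
    detRowContinuousMultilinear v = (of v).det :=
  rfl

theorem hasDerivAt_det_of_hasDerivAt_row {A : 𝕜 → Matrix n n 𝕜} {A' : n → n → 𝕜} {t : 𝕜}
    (hA : ∀ i, HasDerivAt (fun s => A s i) (A' i) t) :
    HasDerivAt (fun s => (A s).det) (∑ i, ((A t).updateRow i (A' i)).det) t := by
  have h := (HasFDerivAt.multilinear_comp (detRowContinuousMultilinear (n := n) (𝕜 := 𝕜))
    (fun i => (hA i).hasFDerivAt)).hasDerivAt
  have hval : (∑ i, (detRowContinuousMultilinear.toContinuousLinearMap (fun j => A t j) i).comp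
      (ContinuousLinearMap.toSpanSingleton 𝕜 (A' i))) 1 = ∑ i, ((A t).updateRow i (A' i)).det := by
    simp [ContinuousMultilinearMap.toContinuousLinearMap, detRowContinuousMultilinear_apply, updateRow]
  rw [hval] at h
  exact h

end Matrix

namespace LinearMap

variable {n R : Type*} [Fintype n] [DecidableEq n] [CommRing R]

theorem trace_eq_trace_toMatrix' (f : (n → R) →ₗ[R] (n → R)) :
    trace R _ f = (toMatrix' f).trace := by
  rw [trace_eq_matrix_trace R (Pi.basisFun R n), toMatrix_eq_toMatrix']

theorem trace_eq_sum_apply_single (f : (n → R) →ₗ[R] (n → R)) :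
    trace R _ f = ∑ i, f (Pi.single i 1) i := by
  simp [trace_eq_trace_toMatrix', Matrix.trace, toMatrix'_apply]

end LinearMap

section Liouville

variable {n 𝕜 : Type*} [Fintype n] [DecidableEq n] [NontriviallyNormedField 𝕜]

theorem hasDerivAt_det_of_hasDerivAt_comp {M : 𝕜 → (n → 𝕜) →L[𝕜] (n → 𝕜)}
    {B : (n → 𝕜) →L[𝕜] (n → 𝕜)} {t : 𝕜} (hM : HasDerivAt M (B ∘L M t) t) :
    HasDerivAt (fun s => LinearMap.det (M s : (n → 𝕜) →ₗ[𝕜] (n → 𝕜)))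
      (LinearMap.trace 𝕜 _ (B : (n → 𝕜) →ₗ[𝕜] (n → 𝕜)) *
        LinearMap.det (M t : (n → 𝕜) →ₗ[𝕜] (n → 𝕜))) t := by
  set A : 𝕜 → Matrix n n 𝕜 := fun s => (LinearMap.toMatrix' (M s : (n → 𝕜) →ₗ[𝕜] (n → 𝕜)))ᵀ
  have hdet : ∀ s, LinearMap.det (M s : (n → 𝕜) →ₗ[𝕜] (n → 𝕜)) = (A s).det := fun s => by
    rw [det_transpose, LinearMap.det_toMatrix']
  have hrow : ∀ s i, A s i = M s (Pi.single i 1) := fun s i => by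
    ext j; simp [A, LinearMap.toMatrix'_apply]
  have hA : ∀ i, HasDerivAt (fun s => A s i)
      (LinearMap.toMatrix' (B : (n → 𝕜) →ₗ[𝕜] (n → 𝕜)) *ᵥ A t i) t := fun i => by
    simp only [hrow, LinearMap.toMatrix'_mulVec]
    simpa using hM.clm_apply (hasDerivAt_const t (Pi.single i (1 : 𝕜)))
  simp only [hdet]
  rw [LinearMap.trace_eq_trace_toMatrix', ← sum_det_updateRow_mulVec]
  exact hasDerivAt_det_of_hasDerivAt_row hA

end Liouville

section MixedPartials

variable {𝕜 E F : Type*} [RCLike 𝕜] [NormedAddCommGroup E] [NormedSpace 𝕜 E]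
  [NormedAddCommGroup F] [NormedSpace 𝕜 F]

theorem hasDerivAt_fderiv_partial_comm {f : 𝕜 × E → F} (hf : ContDiff 𝕜 2 f) (t : 𝕜) (x : E) :
    HasDerivAt (fun s => fderiv 𝕜 (fun y => f (s, y)) x)
      (fderiv 𝕜 (fun y => deriv (fun s => f (s, y)) t) x) t := by
  set G := fderiv 𝕜 f
  have hf' : ∀ p, HasFDerivAt f (G p) p := fun p =>
    ((hf.differentiable two_ne_zero) p).hasFDerivAt
  have hG : ∀ p, HasFDerivAt G (fderiv 𝕜 G p) p := fun p =>
    ((hf.fderiv_right (m := 1) le_rfl).differentiable one_ne_zero p).hasFDerivAt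
  have hx : ∀ s y, fderiv 𝕜 (fun y => f (s, y)) y = G (s, y) ∘L .inr 𝕜 𝕜 E := fun s y =>
    ((hf' (s, y)).comp y (hasFDerivAt_prodMk_right s y)).fderiv
  have ht : ∀ s y, deriv (fun s => f (s, y)) s = G (s, y) (1, 0) := fun s y => by
    simpa [Function.comp_def] using
      ((hf' (s, y)).comp_hasDerivAt s ((hasDerivAt_id s).prodMk (hasDerivAt_const s y))).deriv
  have hxt : HasFDerivAt (fun y => G (t, y) (1, 0))
      ((fderiv 𝕜 G (t, x) ∘L .inr 𝕜 𝕜 E).flip (1, 0)) x := by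
    simpa using ((hG (t, x)).comp x (hasFDerivAt_prodMk_right t x)).clm_apply
      (hasFDerivAt_const ((1 : 𝕜), (0 : E)) x)
  have htx : HasDerivAt (fun s => G (s, x) ∘L .inr 𝕜 𝕜 E)
      (fderiv 𝕜 G (t, x) (1, 0) ∘L .inr 𝕜 𝕜 E) t := by
    have := (hG (t, x)).comp_hasDerivAt t ((hasDerivAt_id t).prodMk (hasDerivAt_const t x))
    simpa [Function.comp_def] using this.clm_comp (hasDerivAt_const t (.inr 𝕜 𝕜 E))
  have hsymm : IsSymmSndFDerivAt 𝕜 f (t, x) := hf.contDiffAt.isSymmSndFDerivAt (by simp)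
  simp_rw [hx, ht]
  rw [hxt.fderiv]
  convert htx using 1
  refine ContinuousLinearMap.ext fun v => ?_
  simpa using hsymm (0, v) (1, 0)

theorem hasDerivAt_fderiv_of_hasDerivAt_flow {u : 𝕜 × F → F} {φ : 𝕜 × E → F} {t : 𝕜} {x : E}
    (hu : DifferentiableAt 𝕜 (fun y => u (t, y)) (φ (t, x))) (hφ : ContDiff 𝕜 2 φ)
    (hflow : ∀ y, HasDerivAt (fun s => φ (s, y)) (u (t, φ (t, y))) t) :
    HasDerivAt (fun s => fderiv 𝕜 (fun y => φ (s, y)) x)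
      (fderiv 𝕜 (fun y => u (t, y)) (φ (t, x)) ∘L fderiv 𝕜 (fun y => φ (t, y)) x) t := by
  have hφt : DifferentiableAt 𝕜 (fun y => φ (t, y)) x :=
    (hφ.differentiable two_ne_zero (t, x)).comp x (hasFDerivAt_prodMk_right t x).differentiableAt
  have h := hasDerivAt_fderiv_partial_comm hφ t x
  simp_rw [fun y => (hflow y).deriv] at h
  rwa [← fderiv_fun_comp x hu hφt]

end MixedPartials

/-- The flow of a divergence-free `C¹` velocity field is volume preserving: the Jacobian
determinant of the flow map equals `1` at all times. This is the Lagrangian statement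
that an incompressible flow transports volume elements without change, the basis of mass
conservation `ρ dᵈx = const` along particle paths. -/
theorem incompressible_flow_is_volume_preserving {d : ℕ}
    (u : ℝ × (Fin d → ℝ) → (Fin d → ℝ))
    (φ : ℝ × (Fin d → ℝ) → (Fin d → ℝ))
    (hu : ContDiff ℝ 1 u) (hφ : ContDiff ℝ 2 φ)
    (hdiv : ∀ (t : ℝ) (x : Fin d → ℝ),
      ∑ a, fderiv ℝ (fun y => u (t, y)) x (Pi.single a 1) a = 0)
    (hinit : ∀ x, φ (0, x) = x)
    (hflow : ∀ (t : ℝ) (x : Fin d → ℝ),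
      HasDerivAt (fun τ => φ (τ, x)) (u (t, φ (t, x))) t) :
    ∀ (t : ℝ) (x₀ : Fin d → ℝ),
      LinearMap.det (fderiv ℝ (fun x => φ (t, x)) x₀).toLinearMap = 1 := by
  intro t x₀
  have hdet_deriv : ∀ s, HasDerivAt
      (fun s => LinearMap.det (fderiv ℝ (fun x => φ (s, x)) x₀).toLinearMap) 0 s := by
    intro s
    have hus : DifferentiableAt ℝ (fun y => u (s, y)) (φ (s, x₀)) :=
      (hu.differentiable one_ne_zero _).comp _ (hasFDerivAt_prodMk_right s _).differentiableAt
    have h := hasDerivAt_det_of_hasDerivAt_comp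
      (hasDerivAt_fderiv_of_hasDerivAt_flow hus hφ (hflow s))
    rwa [LinearMap.trace_eq_sum_apply_single, ContinuousLinearMap.coe_coe, hdiv, zero_mul] at h
  have hφ₀ : (fun x => φ (0, x)) = id := funext hinit
  rw [is_const_of_deriv_eq_zero (fun s => (hdet_deriv s).differentiableAt) (fun s => (hdet_deriv s).deriv) t 0,
    hφ₀, fderiv_id]
  simp
end
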